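/- arXiv:2311.07088 — 9 statements merged into one kernel-verified Lean document; each statement's English description precedes it below -/
import Mathlib

section
/- Let G be a magmal comonad on a magmal category C. Let (Y,υ) and (Z,ζ) be G-coalgebras, and suppose the internal homs (cloaks) [(Y,υ), (GZ, δ_Z)] and [(Y,υ), (G²Z, δ_{GZ})] exist in C^G. Then the cloak [(Y,υ),(Z,ζ)] exists if and only if the parallel pair [1, δ_Z], [1, Gζ] : [(Y,υ),(GZ,δ_Z)] → [(Y,υ),(G²Z,δ_{GZ})] has an equalizer in C^G, and in that case the equalizer is the cloak [(Y,υ),(Z,ζ)]. -/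
open CategoryTheory

namespace WoodStmt3

variable {C : Type*} [Category C]

/-- A magmal comonad: a comonad `G` on a magmal category `(C, T)` together with a natural
family `G₂ : G X ⊗ G Y ⟶ G (X ⊗ Y)` for which `ε` and `δ` are magmal. -/
structure MagmalComonad (T : C ⥤ C ⥤ C) (G : Comonad C) where
  g2 : ∀ X Y : C, (T.obj (G.obj X)).obj (G.obj Y) ⟶ G.obj ((T.obj X).obj Y)
  natl : ∀ {X X' : C} (Y : C) (f : X ⟶ X'),
    (T.map (G.map f)).app (G.obj Y) ≫ g2 X' Y = g2 X Y ≫ G.map ((T.map f).app Y)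
  natr : ∀ (X : C) {Y Y' : C} (g : Y ⟶ Y'),
    (T.obj (G.obj X)).map (G.map g) ≫ g2 X Y' = g2 X Y ≫ G.map ((T.obj X).map g)
  counit_comp : ∀ X Y : C, g2 X Y ≫ G.ε.app ((T.obj X).obj Y) =
    (T.map (G.ε.app X)).app (G.obj Y) ≫ (T.obj X).map (G.ε.app Y)
  delta_comp : ∀ X Y : C, g2 X Y ≫ G.δ.app ((T.obj X).obj Y) =
    (T.map (G.δ.app X)).app (G.obj Y) ≫ (T.obj (G.obj (G.obj X))).map (G.δ.app Y)
      ≫ g2 (G.obj X) (G.obj Y) ≫ G.map (g2 X Y)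

/-- The coaction `G₂ ∘ (ξ ⊗ υ)` on the tensor of the underlying objects. -/
def coact {T : C ⥤ C ⥤ C} {G : Comonad C} (M : MagmalComonad T G)
    (A B : G.Coalgebra) :
    (T.obj A.A).obj B.A ⟶ G.obj ((T.obj A.A).obj B.A) :=
  (T.map A.a).app B.A ≫ (T.obj (G.obj A.A)).map B.a ≫ M.g2 A.A B.A

/-- `(E, ev)` is a left cloak of `Z` by `Y` for a tensor `T` on any category. -/
def IsCloak {D : Type*} [Category D] (T : D ⥤ D ⥤ D) (Y Z E : D)
    (ev : (T.obj E).obj Y ⟶ Z) : Prop :=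
  ∀ (X : D) (f : (T.obj X).obj Y ⟶ Z), ∃! g : X ⟶ E, (T.map g).app Y ≫ ev = f

variable (G : Comonad C)

/-- `δ_Z` as a coalgebra morphism `(GZ, δ_Z) ⟶ (G²Z, δ_{GZ})`. -/
def deltaMor (Z : C) : G.cofree.obj Z ⟶ G.cofree.obj (G.obj Z) :=
  { f := G.δ.app Z
    h := by first | exact G.coassoc Z | exact (G.coassoc Z).symm | simp [Comonad.coassoc] }

/-- The coaction `ζ` as a coalgebra morphism `(Z, ζ) ⟶ (GZ, δ_Z)`. -/
def coactMor (B : G.Coalgebra) : B ⟶ G.cofree.obj B.A :=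
  { f := B.a, h := B.coassoc.symm }

/-!
Every coalgebra `(Z, ζ)` is the equalizer in `C^G` of `δ_Z, Gζ : (GZ, δ_Z) ⇉ (G²Z, δ_{GZ})`,
split in `C` by the counit. A partially defined internal hom `[Y, -]` carries equalizers to
equalizers by Yoneda: maps `X ⟶ [Y, Z]` are maps `X ⊗ Y ⟶ Z`, i.e. maps `X ⊗ Y ⟶ GZ` equalizing
`δ_Z, Gζ`, i.e. maps `X ⟶ [Y, GZ]` equalizing `[1, δ_Z], [1, Gζ]`. Hence `[Y, Z]` exists exactly
when that equalizer does, and then they agree.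
-/

open Limits

section Cloak

variable {D : Type*} [Category D] {T : D ⥤ D ⥤ D} {Y Z E : D} {ev : (T.obj E).obj Y ⟶ Z}

theorem IsCloak.hom_ext (h : IsCloak T Y Z E ev) {X : D} {g g' : X ⟶ E}
    (hg : (T.map g).app Y ≫ ev = (T.map g').app Y ≫ ev) : g = g' :=
  (h X _).unique hg rfl

noncomputable def IsCloak.lift (h : IsCloak T Y Z E ev) {X : D} (f : (T.obj X).obj Y ⟶ Z) :
    X ⟶ E :=
  (h X f).exists.choose

theorem IsCloak.lift_fac (h : IsCloak T Y Z E ev) {X : D} (f : (T.obj X).obj Y ⟶ Z) :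
    (T.map (h.lift f)).app Y ≫ ev = f :=
  (h X f).exists.choose_spec

theorem IsCloak.lift_fac_assoc (h : IsCloak T Y Z E ev) {X W : D} (f : (T.obj X).obj Y ⟶ Z)
    (k : Z ⟶ W) : (T.map (h.lift f)).app Y ≫ ev ≫ k = f ≫ k := by
  rw [← Category.assoc, h.lift_fac]

theorem map_comp_app_comp_eq {X X' X'' W W' : D} (m : X ⟶ X') {i : X' ⟶ X''}
    {e : (T.obj X').obj Y ⟶ W} {e' : (T.obj X'').obj Y ⟶ W'} {j : W ⟶ W'}
    (h : (T.map i).app Y ≫ e' = e ≫ j) :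
    (T.map (m ≫ i)).app Y ≫ e' = (T.map m).app Y ≫ e ≫ j := by
  rw [Functor.map_comp, NatTrans.comp_app, Category.assoc, h]

end Cloak

section CloakEqualizer

variable {D : Type*} [Category D] {T : D ⥤ D ⥤ D} {Y Z₁ Z₂ E₁ E₂ : D} {p q : Z₁ ⟶ Z₂}
  {ev₁ : (T.obj E₁).obj Y ⟶ Z₁} {ev₂ : (T.obj E₂).obj Y ⟶ Z₂} {l₁ l₂ : E₁ ⟶ E₂}

theorem IsCloak.comp_eq_comp_iff (h₂ : IsCloak T Y Z₂ E₂ ev₂)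
    (hl₁ : (T.map l₁).app Y ≫ ev₂ = ev₁ ≫ p) (hl₂ : (T.map l₂).app Y ≫ ev₂ = ev₁ ≫ q)
    {X : D} (g : X ⟶ E₁) :
    g ≫ l₁ = g ≫ l₂ ↔ (T.map g).app Y ≫ ev₁ ≫ p = (T.map g).app Y ≫ ev₁ ≫ q := by
  rw [← map_comp_app_comp_eq g hl₁, ← map_comp_app_comp_eq g hl₂]
  exact ⟨fun h => by rw [h], h₂.hom_ext⟩

theorem IsCloak.lift_comp_ι_condition (h₁ : IsCloak T Y Z₁ E₁ ev₁) (h₂ : IsCloak T Y Z₂ E₂ ev₂)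
    (hl₁ : (T.map l₁).app Y ≫ ev₂ = ev₁ ≫ p) (hl₂ : (T.map l₂).app Y ≫ ev₂ = ev₁ ≫ q)
    {s : Fork p q} {X : D} (f : (T.obj X).obj Y ⟶ s.pt) :
    h₁.lift (f ≫ s.ι) ≫ l₁ = h₁.lift (f ≫ s.ι) ≫ l₂ := by
  rw [h₂.comp_eq_comp_iff hl₁ hl₂, h₁.lift_fac_assoc, h₁.lift_fac_assoc, Category.assoc,
    Category.assoc, s.condition]

theorem IsCloak.map_ι_app_comp_condition (h₂ : IsCloak T Y Z₂ E₂ ev₂)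
    (hl₁ : (T.map l₁).app Y ≫ ev₂ = ev₁ ≫ p) (hl₂ : (T.map l₂).app Y ≫ ev₂ = ev₁ ≫ q)
    (c : Fork l₁ l₂) : ((T.map c.ι).app Y ≫ ev₁) ≫ p = ((T.map c.ι).app Y ≫ ev₁) ≫ q := by
  simpa only [Category.assoc] using (h₂.comp_eq_comp_iff hl₁ hl₂ c.ι).1 c.condition

theorem isCloak_of_isLimit (h₁ : IsCloak T Y Z₁ E₁ ev₁) (h₂ : IsCloak T Y Z₂ E₂ ev₂)
    (hl₁ : (T.map l₁).app Y ≫ ev₂ = ev₁ ≫ p) (hl₂ : (T.map l₂).app Y ≫ ev₂ = ev₁ ≫ q)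
    {s : Fork p q} (hs : IsLimit s) {c : Fork l₁ l₂} (hc : IsLimit c)
    {ev : (T.obj c.pt).obj Y ⟶ s.pt} (hev : (T.map c.ι).app Y ≫ ev₁ = ev ≫ s.ι) :
    IsCloak T Y s.pt c.pt ev := by
  intro X f
  obtain ⟨u, hu⟩ := Fork.IsLimit.lift' hc _ (h₁.lift_comp_ι_condition h₂ hl₁ hl₂ f)
  refine ⟨u, Fork.IsLimit.hom_ext hs ?_, fun m hm => Fork.IsLimit.hom_ext hc ?_⟩
  · rw [Category.assoc, ← map_comp_app_comp_eq u hev, hu, h₁.lift_fac]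
  · rw [hu]
    exact h₁.hom_ext (by rw [map_comp_app_comp_eq m hev, ← Category.assoc, hm, h₁.lift_fac])

noncomputable def isLimitOfIsCloak (h₁ : IsCloak T Y Z₁ E₁ ev₁) (h₂ : IsCloak T Y Z₂ E₂ ev₂)
    (hl₁ : (T.map l₁).app Y ≫ ev₂ = ev₁ ≫ p) (hl₂ : (T.map l₂).app Y ≫ ev₂ = ev₁ ≫ q)
    {s : Fork p q} (hs : IsLimit s) {c : Fork l₁ l₂} {ev : (T.obj c.pt).obj Y ⟶ s.pt}
    (h : IsCloak T Y s.pt c.pt ev) (hev : (T.map c.ι).app Y ≫ ev₁ = ev ≫ s.ι) :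
    IsLimit c :=
  Fork.IsLimit.mk' c fun t =>
    let k := Fork.IsLimit.lift' hs _ (h₂.map_ι_app_comp_condition hl₁ hl₂ t)
    ⟨h.lift k.1,
      h₁.hom_ext <| by rw [map_comp_app_comp_eq _ hev, h.lift_fac_assoc, k.2],
      fun {m} hm => h.hom_ext <| Fork.IsLimit.hom_ext hs <| by
        rw [Category.assoc, Category.assoc, ← map_comp_app_comp_eq m hev, hm,
          h.lift_fac_assoc, k.2]⟩

end CloakEqualizer

theorem coactMor_comp_deltaMor (B : G.Coalgebra) :
    coactMor G B ≫ deltaMor G B.A = coactMor G B ≫ G.cofree.map B.a := by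
  ext
  exact B.coassoc

theorem comp_counit_comp_a {B : G.Coalgebra} {X : C} {h : X ⟶ G.obj B.A}
    (hh : h ≫ G.δ.app B.A = h ≫ G.map B.a) : h ≫ G.ε.app B.A ≫ B.a = h := by
  have nat : G.map B.a ≫ G.ε.app (G.obj B.A) = G.ε.app B.A ≫ B.a := G.ε.naturality B.a
  rw [← nat, ← Category.assoc, ← hh, Category.assoc, G.left_counit, Category.comp_id]

theorem eq_comp_counit_of_comp_a_eq {B : G.Coalgebra} {X : C} {k : X ⟶ B.A}
    {h : X ⟶ G.obj B.A} (hk : k ≫ B.a = h) : k = h ≫ G.ε.app B.A := by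
  rw [← hk, Category.assoc, B.counit, Category.comp_id]

/-- The transpose `h ≫ ε` of `h` under `forget ⊣ cofree`. -/
def coactForkLift {B W : G.Coalgebra} (h : W.A ⟶ G.obj B.A)
    (hW : W.a ≫ G.map h = h ≫ G.δ.app B.A)
    (hh : h ≫ G.δ.app B.A = h ≫ G.map B.a) : W ⟶ B where
  f := h ≫ G.ε.app B.A
  h := by
    rw [Functor.map_comp, ← Category.assoc, hW, Category.assoc, G.right_counit,
      Category.comp_id, Category.assoc, comp_counit_comp_a G hh]

noncomputable def isLimitCoactFork (B : G.Coalgebra) :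
    IsLimit (Fork.ofι _ (coactMor_comp_deltaMor G B)) :=
  Fork.IsLimit.mk' _ fun s =>
    have hs : s.ι.f ≫ G.δ.app B.A = s.ι.f ≫ G.map B.a :=
      congrArg Comonad.Coalgebra.Hom.f s.condition
    ⟨coactForkLift G s.ι.f s.ι.h hs,
      Comonad.Coalgebra.Hom.ext <| (Category.assoc _ _ _).trans (comp_counit_comp_a G hs),
      fun hm => Comonad.Coalgebra.Hom.ext <|
        eq_comp_counit_of_comp_a_eq G (congrArg Comonad.Coalgebra.Hom.f hm)⟩

theorem cloak_iff_equalizer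
    (Tbar : G.Coalgebra ⥤ G.Coalgebra ⥤ G.Coalgebra)
    (A B : G.Coalgebra)
    -- the cloak `[(Y,υ), (GZ, δ_Z)]`
    (E1 : G.Coalgebra) (ev1 : (Tbar.obj E1).obj A ⟶ G.cofree.obj B.A)
    (h1 : IsCloak Tbar A (G.cofree.obj B.A) E1 ev1)
    -- the cloak `[(Y,υ), (G²Z, δ_{GZ})]`
    (E2 : G.Coalgebra) (ev2 : (Tbar.obj E2).obj A ⟶ G.cofree.obj (G.obj B.A))
    (h2 : IsCloak Tbar A (G.cofree.obj (G.obj B.A)) E2 ev2)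
    -- the induced parallel pair `[1, δ_Z], [1, Gζ] : E1 ⟶ E2`
    (l1 l2 : E1 ⟶ E2)
    (hl1 : (Tbar.map l1).app A ≫ ev2 = ev1 ≫ deltaMor G B.A)
    (hl2 : (Tbar.map l2).app A ≫ ev2 = ev1 ≫ G.cofree.map B.a) :
    ((∃ (E : G.Coalgebra) (ev : (Tbar.obj E).obj A ⟶ B), IsCloak Tbar A B E ev) ↔
      Limits.HasEqualizer l1 l2) ∧
    (∀ (c : Limits.Fork l1 l2), Limits.IsLimit c →
      ∃ ev : (Tbar.obj c.pt).obj A ⟶ B,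
        IsCloak Tbar A B c.pt ev ∧
        (Tbar.map c.ι).app A ≫ ev1 = ev ≫ coactMor G B) := by
  have hB := isLimitCoactFork G B
  have cloak_of_limit : ∀ c : Fork l1 l2, IsLimit c →
      ∃ ev : (Tbar.obj c.pt).obj A ⟶ B,
        IsCloak Tbar A B c.pt ev ∧ (Tbar.map c.ι).app A ≫ ev1 = ev ≫ coactMor G B := by
    intro c hc
    obtain ⟨ev, hev⟩ := Fork.IsLimit.lift' hB _ (h2.map_ι_app_comp_condition hl1 hl2 c)
    exact ⟨ev, isCloak_of_isLimit h1 h2 hl1 hl2 hB hc hev.symm, hev.symm⟩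
  refine ⟨⟨fun ⟨E, ev, hE⟩ => ?_, fun _ => ?_⟩, cloak_of_limit⟩
  · have hι := h1.lift_comp_ι_condition h2 hl1 hl2 (s := Fork.ofι _ (coactMor_comp_deltaMor G B)) ev
    exact ⟨⟨_, isLimitOfIsCloak h1 h2 hl1 hl2 hB (c := Fork.ofι _ hι) hE (h1.lift_fac _)⟩⟩
  · obtain ⟨ev, hcl, -⟩ := cloak_of_limit _ (limit.isLimit (parallelPair l1 l2))
    exact ⟨_, ev, hcl⟩

end WoodStmt3
end

section
/- Let G be a magmal comonad on a magmal category C, and suppose the left cloaks [Y,Z] and [GY,GZ] exist in C (right adjoints to -⊗Y and -⊗GY evaluated at Z and GZ respectively). Then for any G-coalgebra (Y,υ) and any object Z, the cofree coalgebra (G[Y,Z], δ_{[Y,Z]}) together with the evaluation map ev := ev^{GY}_{GZ} ∘ (G₂ˡ ⊗ υ) : G[Y,Z] ⊗ Y → GZ is a left cloak of the cofree coalgebra (GZ, δ_Z) by (Y,υ) in C^G; that is, composition with ev induces a bijection C^G((A,α), (G[Y,Z], δ_{[Y,Z]})) ≅ C^G((A,α) ⊗ (Y,υ), (GZ, δ_Z))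 for all coalgebras (A,α). -/
open CategoryTheory

namespace WoodStmt4

variable {C : Type*} [Category C]

/-- A magmal comonad: a comonad `G` on a magmal category `(C, T)` together with a natural
family `G₂ : G X ⊗ G Y ⟶ G (X ⊗ Y)` for which `ε` and `δ` are magmal. -/
structure MagmalComonad (T : C ⥤ C ⥤ C) (G : Comonad C) where
  g2 : ∀ X Y : C, (T.obj (G.obj X)).obj (G.obj Y) ⟶ G.obj ((T.obj X).obj Y)
  natl : ∀ {X X' : C} (Y : C) (f : X ⟶ X'),
    (T.map (G.map f)).app (G.obj Y) ≫ g2 X' Y = g2 X Y ≫ G.map ((T.map f).app Y)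
  natr : ∀ (X : C) {Y Y' : C} (g : Y ⟶ Y'),
    (T.obj (G.obj X)).map (G.map g) ≫ g2 X Y' = g2 X Y ≫ G.map ((T.obj X).map g)
  counit_comp : ∀ X Y : C, g2 X Y ≫ G.ε.app ((T.obj X).obj Y) =
    (T.map (G.ε.app X)).app (G.obj Y) ≫ (T.obj X).map (G.ε.app Y)
  delta_comp : ∀ X Y : C, g2 X Y ≫ G.δ.app ((T.obj X).obj Y) =
    (T.map (G.δ.app X)).app (G.obj Y) ≫ (T.obj (G.obj (G.obj X))).map (G.δ.app Y)
      ≫ g2 (G.obj X) (G.obj Y) ≫ G.map (g2 X Y)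

/-- The coaction `G₂ ∘ (ξ ⊗ υ)` on the tensor product of the underlying objects of two
`G`-coalgebras. -/
def coact {T : C ⥤ C ⥤ C} {G : Comonad C} (M : MagmalComonad T G)
    (A B : G.Coalgebra) :
    (T.obj A.A).obj B.A ⟶ G.obj ((T.obj A.A).obj B.A) :=
  (T.map A.a).app B.A ≫ (T.obj (G.obj A.A)).map B.a ≫ M.g2 A.A B.A

/-- `(E, ev)` is a left cloak of `Z` by `Y` for a tensor `T` on any category:
composition with `ev : E ⊗ Y ⟶ Z` induces bijections `(X ⟶ E) ≅ (X ⊗ Y ⟶ Z)`. -/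
def IsCloak {D : Type*} [Category D] (T : D ⥤ D ⥤ D) (Y Z E : D)
    (ev : (T.obj E).obj Y ⟶ Z) : Prop :=
  ∀ (X : D) (f : (T.obj X).obj Y ⟶ Z), ∃! g : X ⟶ E, (T.map g).app Y ≫ ev = f

/-! Coalgebra maps `X ⟶ G E` correspond to maps `X.A ⟶ E` in `C` by composing with `ε`.
The counit composite of `ev := ev₂ ∘ (G₂ˡ ⊗ υ)` is `(ε ⊗ 1) ≫ ev₁`, so the counit composite of
`(g ⊗ 1) ≫ ev` is `((g ≫ ε) ⊗ 1) ≫ ev₁`, and the universal property of `([Y,Z], ev₁)` in `C`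
transfers along these two bijections. That `ev` is a coalgebra map with this counit composite
comes from the mate equation, naturality of `G₂` and the comonad law `Gε ∘ δ = 1`. -/

section Cofree

variable {G : Comonad C}

/-- The transpose of `q` under `G.adj : G.forget ⊣ G.cofree`, with a definitional `f`. -/
def homCofree (W : G.Coalgebra) {Z : C} (q : W.A ⟶ Z) : W ⟶ G.cofree.obj Z where
  f := W.a ≫ G.map q
  h := by
    erw [Functor.map_comp, ← W.coassoc_assoc, Category.assoc, ← G.δ.naturality q]
    rfl

@[simp]
lemma homCofree_f (W : G.Coalgebra) {Z : C} (q : W.A ⟶ Z) : (homCofree W q).f = W.a ≫ G.map q :=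
  rfl

lemma homCofree_f_comp_counit (W : G.Coalgebra) {Z : C} (q : W.A ⟶ Z) :
    (homCofree W q).f ≫ G.ε.app Z = q := by
  erw [Category.assoc, G.ε.naturality q, W.counit_assoc]
  rfl

lemma hom_cofree_f_eq {W : G.Coalgebra} {Z : C} (u : W ⟶ G.cofree.obj Z) :
    u.f = W.a ≫ G.map (u.f ≫ G.ε.app Z) := by
  have h : W.a ≫ G.map u.f = u.f ≫ G.δ.app Z := u.h
  erw [Functor.map_comp, ← Category.assoc, h, Category.assoc, Comonad.right_counit]
  exact (Category.comp_id _).symm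

lemma cofree_hom_ext {W : G.Coalgebra} {Z : C} {u v : W ⟶ G.cofree.obj Z}
    (h : u.f ≫ G.ε.app Z = v.f ≫ G.ε.app Z) : u = v := by
  ext
  rw [hom_cofree_f_eq u, hom_cofree_f_eq v, h]

end Cofree

namespace MagmalComonad

variable {T : C ⥤ C ⥤ C} {G : Comonad C} (M : MagmalComonad T G)

lemma coact_cofree_comp_map_counit_comp (X : C) (A : G.Coalgebra) {Y : C}
    (f : (T.obj X).obj A.A ⟶ Y) :
    coact M (G.cofree.obj X) A ≫ G.map ((T.map (G.ε.app X)).app A.A ≫ f) =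
      (T.obj (G.obj X)).map A.a ≫ M.g2 X A.A ≫ G.map f := by
  have hδε : (T.map (G.δ.app X)).app A.A ≫ (T.map (G.map (G.ε.app X))).app A.A = 𝟙 _ := by
    rw [← NatTrans.comp_app, ← T.map_comp, Comonad.right_counit]
    simp
  unfold coact
  simp only [Category.assoc]
  show (T.map (G.δ.app X)).app A.A ≫ (T.obj (G.obj (G.obj X))).map A.a ≫
    M.g2 (G.obj X) A.A ≫ G.map ((T.map (G.ε.app X)).app A.A ≫ f) = _
  rw [Functor.map_comp, ← reassoc_of% (M.natl A.A (G.ε.app X)),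
    (T.map (G.map (G.ε.app X))).naturality_assoc, reassoc_of% hδε]
  rfl

end MagmalComonad

lemma isCloak_cofree {T : C ⥤ C ⥤ C} {G : Comonad C}
    (Tbar : G.Coalgebra ⥤ G.Coalgebra ⥤ G.Coalgebra)
    (hobj : ∀ A B : G.Coalgebra, ((Tbar.obj A).obj B).A = (T.obj A.A).obj B.A)
    (hmap : ∀ {A A' : G.Coalgebra} (B : G.Coalgebra) (f : A ⟶ A'),
      ((Tbar.map f).app B).f = eqToHom (hobj A B) ≫ (T.map f.f).app B.A ≫
        eqToHom (hobj A' B).symm)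
    {A : G.Coalgebra} {Z E : C} {ev₀ : (T.obj E).obj A.A ⟶ Z} (h : IsCloak T A.A Z E ev₀)
    (ev : (Tbar.obj (G.cofree.obj E)).obj A ⟶ G.cofree.obj Z)
    (hev : ev.f ≫ G.ε.app Z =
      eqToHom (hobj (G.cofree.obj E) A) ≫ (T.map (G.ε.app E)).app A.A ≫ ev₀) :
    IsCloak Tbar A (G.cofree.obj Z) (G.cofree.obj E) ev := by
  have hcounit {X : G.Coalgebra} (g : X ⟶ G.cofree.obj E) :
      ((Tbar.map g).app A ≫ ev).f ≫ G.ε.app Z =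
        eqToHom (hobj X A) ≫ (T.map (g.f ≫ G.ε.app E)).app A.A ≫ ev₀ := by
    erw [Category.assoc, hev, hmap, T.map_comp]
    simp only [Category.assoc, eqToHom_trans_assoc, eqToHom_refl, Category.id_comp,
      NatTrans.comp_app]
    rfl
  have hcounit_iff {X : G.Coalgebra} (f : (Tbar.obj X).obj A ⟶ G.cofree.obj Z)
      (g : X ⟶ G.cofree.obj E) : (Tbar.map g).app A ≫ ev = f ↔
        (T.map (g.f ≫ G.ε.app E)).app A.A ≫ ev₀ = eqToHom (hobj X A).symm ≫ f.f ≫ G.ε.app Z := by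
    constructor
    · rintro rfl
      rw [hcounit]
      simp
    · intro hg
      apply cofree_hom_ext
      rw [hcounit, hg]
      simp
  intro X f
  obtain ⟨g₀, hg₀, hg₀_unique⟩ := h X.A (eqToHom (hobj X A).symm ≫ f.f ≫ G.ε.app Z)
  refine ⟨homCofree X g₀, (hcounit_iff f _).2 (by rwa [homCofree_f_comp_counit]), fun g hg => ?_⟩
  apply cofree_hom_ext
  rw [homCofree_f_comp_counit]
  exact hg₀_unique _ ((hcounit_iff f g).1 hg)

theorem cofree_cloak_general (T : C ⥤ C ⥤ C) (G : Comonad C) (M : MagmalComonad T G)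
    (Tbar : G.Coalgebra ⥤ G.Coalgebra ⥤ G.Coalgebra)
    (hobj : ∀ A B : G.Coalgebra, ((Tbar.obj A).obj B).A = (T.obj A.A).obj B.A)
    (hcoact : ∀ A B : G.Coalgebra, ((Tbar.obj A).obj B).a =
      eqToHom (hobj A B) ≫ coact M A B ≫ G.map (eqToHom (hobj A B).symm))
    (hmap : ∀ {A A' B B' : G.Coalgebra} (f : A ⟶ A') (g : B ⟶ B'),
      ((Tbar.map f).app B ≫ (Tbar.obj A').map g).f =
        eqToHom (hobj A B) ≫ (T.map f.f).app B.A ≫ (T.obj A'.A).map g.f ≫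
          eqToHom (hobj A' B').symm)
    (A : G.Coalgebra) (Z : C)
    (E1 : C) (ev1 : (T.obj E1).obj A.A ⟶ Z) (h1 : IsCloak T A.A Z E1 ev1)
    (E2G : C) (ev2G : (T.obj E2G).obj (G.obj A.A) ⟶ G.obj Z)
    (g2l : G.obj E1 ⟶ E2G)
    (hg2l : (T.map g2l).app (G.obj A.A) ≫ ev2G = M.g2 E1 A.A ≫ G.map ev1) :
    ∃ ev : (Tbar.obj (G.cofree.obj E1)).obj A ⟶ G.cofree.obj Z,
      ev.f = eqToHom (hobj (G.cofree.obj E1) A) ≫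
        (T.map g2l).app A.A ≫ (T.obj E2G).map A.a ≫ ev2G ∧
      IsCloak Tbar A (G.cofree.obj Z) (G.cofree.obj E1) ev := by
  have hmate : (T.map g2l).app A.A ≫ (T.obj E2G).map A.a ≫ ev2G =
      (T.obj (G.obj E1)).map A.a ≫ M.g2 E1 A.A ≫ G.map ev1 := by
    rw [← hg2l]
    exact ((T.map g2l).naturality_assoc A.a ev2G).symm
  let q := eqToHom (hobj (G.cofree.obj E1) A) ≫ (T.map (G.ε.app E1)).app A.A ≫ ev1
  refine ⟨homCofree _ q, ?_, isCloak_cofree Tbar hobj (fun B f => by simpa using hmap f (𝟙 B))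
    h1 _ (homCofree_f_comp_counit _ q)⟩
  rw [homCofree_f, hcoact]
  simp only [q, Category.assoc, ← Functor.map_comp, eqToHom_trans_assoc, eqToHom_refl,
    Category.id_comp]
  erw [M.coact_cofree_comp_map_counit_comp, hmate]

/-- Let `G` be a magmal comonad on a magmal category `(C, T)` and
suppose the left cloaks `([Y,Z], ev₁)` and `([GY,GZ], ev₂)` exist in `C`.  Let `G₂ˡ` be
the mate of `G₂` (characterized by `(G₂ˡ ⊗ 1) ≫ ev₂ = G₂ ≫ G ev₁`).  Then for any
`G`-coalgebra `(Y, υ)`, the cofree coalgebra `(G[Y,Z], δ)` with evaluation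
`ev₂ ∘ (G₂ˡ ⊗ υ)` is a left cloak of the cofree coalgebra `(GZ, δ_Z)` by `(Y, υ)` in the
magmal category `C^G`. -/
theorem cofree_cloak (T : C ⥤ C ⥤ C) (G : Comonad C) (M : MagmalComonad T G)
    (Tbar : G.Coalgebra ⥤ G.Coalgebra ⥤ G.Coalgebra)
    (hobj : ∀ A B : G.Coalgebra, ((Tbar.obj A).obj B).A = (T.obj A.A).obj B.A)
    (hcoact : ∀ A B : G.Coalgebra, ((Tbar.obj A).obj B).a =
      eqToHom (hobj A B) ≫ coact M A B ≫ G.map (eqToHom (hobj A B).symm))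
    (hmap : ∀ {A A' B B' : G.Coalgebra} (f : A ⟶ A') (g : B ⟶ B'),
      ((Tbar.map f).app B ≫ (Tbar.obj A').map g).f =
        eqToHom (hobj A B) ≫ (T.map f.f).app B.A ≫ (T.obj A'.A).map g.f ≫
          eqToHom (hobj A' B').symm)
    (A : G.Coalgebra) (Z : C)
    (E1 : C) (ev1 : (T.obj E1).obj A.A ⟶ Z) (h1 : IsCloak T A.A Z E1 ev1)
    (E2G : C) (ev2G : (T.obj E2G).obj (G.obj A.A) ⟶ G.obj Z)
    (h2G : IsCloak T (G.obj A.A) (G.obj Z) E2G ev2G)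
    (g2l : G.obj E1 ⟶ E2G)
    (hg2l : (T.map g2l).app (G.obj A.A) ≫ ev2G = M.g2 E1 A.A ≫ G.map ev1) :
    ∃ ev : (Tbar.obj (G.cofree.obj E1)).obj A ⟶ G.cofree.obj Z,
      ev.f = eqToHom (hobj (G.cofree.obj E1) A) ≫
        (T.map g2l).app A.A ≫ (T.obj E2G).map A.a ≫ ev2G ∧
      IsCloak Tbar A (G.cofree.obj Z) (G.cofree.obj E1) ev :=
  cofree_cloak_general T G M Tbar hobj hcoact hmap A Z E1 ev1 h1 E2G ev2G g2l hg2l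

end WoodStmt4
end

section
/- Let G be a magmal comonad on a magmal category C with left cloaks, let (Y,υ) be a G-coalgebra and Z ∈ C. Define the Wood fusion morphism w_{υ,Z} : G[Y,Z] → [Y,GZ] as the composite [υ,1] ∘ G₂ˡ. If w_{δ_Y, Z} : G[GY,Z] → [GY,GZ] is invertible and w_{δ_{GY}, Z} : G[G²Y,Z] → [G²Y,GZ] is an epimorphism, then w_{υ,Z} is invertible. -/
/-!
The coalgebra `(Y, υ)` is the split (Beck) equalizer `Y → GY ⇉ G²Y`, and the cloak
construction `[-, Z]` turns split equalizers into split coequalizers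
`[G²Y, Z] ⇉ [GY, Z] → [Y, Z]`. The Wood fusion morphisms `w_{υ,Z}`, `w_{δ_Y,Z}` and
`w_{δ_{GY},Z}` are natural in morphisms of coactions, so they form a morphism from `G` of this
diagram (still a coequalizer, being `G` of a split one) to the same diagram with `GZ` for `Z`.
A morphism of coequalizer diagrams whose middle component is invertible and whose left
component is epi has invertible right component.
-/

open CategoryTheory Limits

namespace WoodStmt5

variable {C : Type*} [Category C]

/-- A magmal comonad: a comonad `G` on a magmal category `(C, T)` together with a natural
family `G₂ : G X ⊗ G Y ⟶ G (X ⊗ Y)` for which `ε` and `δ` are magmal. -/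
structure MagmalComonad (T : C ⥤ C ⥤ C) (G : Comonad C) where
  g2 : ∀ X Y : C, (T.obj (G.obj X)).obj (G.obj Y) ⟶ G.obj ((T.obj X).obj Y)
  natl : ∀ {X X' : C} (Y : C) (f : X ⟶ X'),
    (T.map (G.map f)).app (G.obj Y) ≫ g2 X' Y = g2 X Y ≫ G.map ((T.map f).app Y)
  natr : ∀ (X : C) {Y Y' : C} (g : Y ⟶ Y'),
    (T.obj (G.obj X)).map (G.map g) ≫ g2 X Y' = g2 X Y ≫ G.map ((T.obj X).map g)
  counit_comp : ∀ X Y : C, g2 X Y ≫ G.ε.app ((T.obj X).obj Y) =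
    (T.map (G.ε.app X)).app (G.obj Y) ≫ (T.obj X).map (G.ε.app Y)
  delta_comp : ∀ X Y : C, g2 X Y ≫ G.δ.app ((T.obj X).obj Y) =
    (T.map (G.δ.app X)).app (G.obj Y) ≫ (T.obj (G.obj (G.obj X))).map (G.δ.app Y)
      ≫ g2 (G.obj X) (G.obj Y) ≫ G.map (g2 X Y)

/-- `(E, ev)` is a left cloak of `Z` by `Y` for the tensor `T`: composition with
`ev : E ⊗ Y ⟶ Z` induces bijections `C(X, E) ≅ C(X ⊗ Y, Z)`. -/
def IsCloak (T : C ⥤ C ⥤ C) (Y Z E : C) (ev : (T.obj E).obj Y ⟶ Z) : Prop :=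
  ∀ (X : C) (f : (T.obj X).obj Y ⟶ Z), ∃! g : X ⟶ E, (T.map g).app Y ≫ ev = f

theorem isIso_of_cofork_hom {D : Type*} [Category D]
    {X Y Z X' Y' Z' : D} {f g : X ⟶ Y} {π : Y ⟶ Z} (hπ : f ≫ π = g ≫ π) [Epi π]
    {f' g' : X' ⟶ Y'} {π' : Y' ⟶ Z'} {hπ' : f' ≫ π' = g' ≫ π'}
    (hc : IsColimit (Cofork.ofπ π' hπ')) (a : X ⟶ X') (b : Y ⟶ Y') (c : Z ⟶ Z')
    (hf : f ≫ b = a ≫ f') (hg : g ≫ b = a ≫ g') (hb : π ≫ c = b ≫ π')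
    [Epi a] [IsIso b] :
    IsIso c := by
  obtain ⟨c', hc'⟩ := Cofork.IsColimit.desc' hc (inv b ≫ π) <| by
    rw [← cancel_epi a, ← reassoc_of% hf, ← reassoc_of% hg, IsIso.hom_inv_id_assoc, hπ]
  replace hc' : π' ≫ c' = inv b ≫ π := hc'
  refine ⟨c', ?_, Cofork.IsColimit.hom_ext hc ?_⟩
  · rw [← cancel_epi π, reassoc_of% hb, hc', IsIso.hom_inv_id_assoc, Category.comp_id]
  · rw [Cofork.π_ofπ, reassoc_of% hc', hb, IsIso.inv_hom_id_assoc]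
    exact (Category.comp_id π').symm

namespace IsCloak

variable {T : C ⥤ C ⥤ C} {Y Z E : C} {ev : (T.obj E).obj Y ⟶ Z}

theorem hom_ext (h : IsCloak T Y Z E ev) {X : C} {g g' : X ⟶ E}
    (hg : (T.map g).app Y ≫ ev = (T.map g').app Y ≫ ev) : g = g' :=
  (h X _).unique hg rfl

/-- The morphism `[k, 1] : [Y', Z] ⟶ [Y, Z]` between cloaks. -/
noncomputable def precomp (h : IsCloak T Y Z E ev) {Y' E' : C} (ev' : (T.obj E').obj Y' ⟶ Z)
    (k : Y ⟶ Y') : E' ⟶ E :=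
  (h E' ((T.obj E').map k ≫ ev')).exists.choose

variable {Y' Y'' E' E'' : C} {ev' : (T.obj E').obj Y' ⟶ Z} {ev'' : (T.obj E'').obj Y'' ⟶ Z}

theorem precomp_spec (h : IsCloak T Y Z E ev) (k : Y ⟶ Y') :
    (T.map (h.precomp ev' k)).app Y ≫ ev = (T.obj E').map k ≫ ev' :=
  (h E' _).exists.choose_spec

theorem precomp_id (h : IsCloak T Y Z E ev) : h.precomp ev (𝟙 Y) = 𝟙 E :=
  h.hom_ext <| by rw [precomp_spec, T.map_id, NatTrans.id_app, (T.obj E).map_id]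

theorem precomp_comp (h : IsCloak T Y Z E ev) (h' : IsCloak T Y' Z E' ev')
    (k : Y ⟶ Y') (k' : Y' ⟶ Y'') :
    h.precomp ev'' (k ≫ k') = h'.precomp ev'' k' ≫ h.precomp ev' k :=
  h.hom_ext <| by
    rw [precomp_spec, T.map_comp, NatTrans.comp_app, Category.assoc, precomp_spec,
      ← NatTrans.naturality_assoc, precomp_spec, (T.obj E'').map_comp_assoc]

theorem precomp_comp_precomp_of_comp_eq_id (h : IsCloak T Y Z E ev)
    (h' : IsCloak T Y' Z E' ev') {k : Y ⟶ Y'} {r : Y' ⟶ Y} (hkr : k ≫ r = 𝟙 Y) :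
    h'.precomp ev r ≫ h.precomp ev' k = 𝟙 E := by
  rw [← precomp_comp, hkr, precomp_id]

end IsCloak

noncomputable def _root_.CategoryTheory.IsSplitEqualizer.cloakCoequalizer
    {T : C ⥤ C ⥤ C} {W X Y Z : C} {f g : X ⟶ Y} {ι : W ⟶ X} (s : IsSplitEqualizer f g ι)
    {EW EX EY : C} {evW : (T.obj EW).obj W ⟶ Z} {evX : (T.obj EX).obj X ⟶ Z}
    {evY : (T.obj EY).obj Y ⟶ Z} (hW : IsCloak T W Z EW evW) (hX : IsCloak T X Z EX evX)
    (hY : IsCloak T Y Z EY evY) :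
    IsSplitCoequalizer (hX.precomp evY f) (hX.precomp evY g) (hW.precomp evX ι) where
  rightSection := hX.precomp evW s.leftRetraction
  leftSection := hY.precomp evX s.rightRetraction
  condition := by rw [← hW.precomp_comp hX, ← hW.precomp_comp hX, s.condition]
  rightSection_π := hW.precomp_comp_precomp_of_comp_eq_id hX s.ι_leftRetraction
  leftSection_bottom := hX.precomp_comp_precomp_of_comp_eq_id hY s.bottom_rightRetraction
  leftSection_top := by rw [← hX.precomp_comp hY, s.top_rightRetraction, hX.precomp_comp hW]

section WoodFusion

variable {T : C ⥤ C ⥤ C} {G : Comonad C}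

/-- `w` is the Wood fusion morphism `w_{α,Z} = [α, 1] ∘ G₂ˡ : G[Y, Z] ⟶ [Y, GZ]` of a
coaction-shaped `α : Y ⟶ GY`, described through the universal property of the cloak
`([Y, GZ], evG)`. -/
def IsWoodFusion (M : MagmalComonad T G) {Y Z E EG : C} (α : Y ⟶ G.obj Y)
    (ev : (T.obj E).obj Y ⟶ Z) (evG : (T.obj EG).obj Y ⟶ G.obj Z) (w : G.obj E ⟶ EG) : Prop :=
  (T.map w).app Y ≫ evG = (T.obj (G.obj E)).map α ≫ M.g2 E Y ≫ G.map ev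

theorem IsWoodFusion.map_precomp_comp {M : MagmalComonad T G} {Y Y' Z E E' EG E'G : C}
    {α : Y ⟶ G.obj Y} {α' : Y' ⟶ G.obj Y'} {d : Y ⟶ Y'} (hd : α ≫ G.map d = d ≫ α')
    {ev : (T.obj E).obj Y ⟶ Z} {ev' : (T.obj E').obj Y' ⟶ Z}
    {evG : (T.obj EG).obj Y ⟶ G.obj Z} {ev'G : (T.obj E'G).obj Y' ⟶ G.obj Z}
    (h : IsCloak T Y Z E ev) (hG : IsCloak T Y (G.obj Z) EG evG)
    {w : G.obj E ⟶ EG} {w' : G.obj E' ⟶ E'G}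
    (hw : IsWoodFusion M α ev evG w) (hw' : IsWoodFusion M α' ev' ev'G w') :
    G.map (h.precomp ev' d) ≫ w = w' ≫ hG.precomp ev'G d :=
  hG.hom_ext <| calc
    _ = (T.map (G.map (h.precomp ev' d))).app Y ≫ (T.obj (G.obj E)).map α ≫ M.g2 E Y ≫
          G.map ev := by rw [T.map_comp, NatTrans.comp_app, Category.assoc, hw]
    _ = (T.obj (G.obj E')).map α ≫ M.g2 E' Y ≫
          G.map ((T.map (h.precomp ev' d)).app Y ≫ ev) := by
          rw [← NatTrans.naturality_assoc, reassoc_of% M.natl, G.map_comp]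
    _ = (T.obj (G.obj E')).map (α ≫ G.map d) ≫ M.g2 E' Y' ≫ G.map ev' := by
          rw [h.precomp_spec, G.map_comp, ← reassoc_of% M.natr, (T.obj _).map_comp_assoc]
    _ = (T.obj (G.obj E')).map d ≫ (T.map w').app Y' ≫ ev'G := by
          rw [hd, (T.obj _).map_comp_assoc, hw']
    _ = _ := by
          rw [NatTrans.naturality_assoc, ← hG.precomp_spec, T.map_comp, NatTrans.comp_app,
            Category.assoc]

end WoodFusion

theorem wood_fusion_invertible_general (T : C ⥤ C ⥤ C) (G : Comonad C) (M : MagmalComonad T G)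
    (A : G.Coalgebra) (Z : C)
    -- cloaks [Y,Z], [Y,GZ]
    (E1 : C) (ev1 : (T.obj E1).obj A.A ⟶ Z) (h1 : IsCloak T A.A Z E1 ev1)
    (E1G : C) (ev1G : (T.obj E1G).obj A.A ⟶ G.obj Z) (h1G : IsCloak T A.A (G.obj Z) E1G ev1G)
    -- cloaks [GY,Z], [GY,GZ]
    (E2 : C) (ev2 : (T.obj E2).obj (G.obj A.A) ⟶ Z) (h2 : IsCloak T (G.obj A.A) Z E2 ev2)
    (E2G : C) (ev2G : (T.obj E2G).obj (G.obj A.A) ⟶ G.obj Z)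
    (h2G : IsCloak T (G.obj A.A) (G.obj Z) E2G ev2G)
    -- cloaks [G²Y,Z], [G²Y,GZ]
    (E3 : C) (ev3 : (T.obj E3).obj (G.obj (G.obj A.A)) ⟶ Z)
    (E3G : C) (ev3G : (T.obj E3G).obj (G.obj (G.obj A.A)) ⟶ G.obj Z)
    (h3G : IsCloak T (G.obj (G.obj A.A)) (G.obj Z) E3G ev3G)
    -- the Wood fusion morphism `w_{υ,Z}`
    (w : G.obj E1 ⟶ E1G)
    (hw : (T.map w).app A.A ≫ ev1G =
      (T.obj (G.obj E1)).map A.a ≫ M.g2 E1 A.A ≫ G.map ev1)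
    -- the Wood fusion morphism `w₁ = w_{δ_Y,Z}`
    (w1 : G.obj E2 ⟶ E2G)
    (hw1 : (T.map w1).app (G.obj A.A) ≫ ev2G =
      (T.obj (G.obj E2)).map (G.δ.app A.A) ≫ M.g2 E2 (G.obj A.A) ≫ G.map ev2)
    -- the Wood fusion morphism `w₂ = w_{δ_{GY},Z}`
    (w2 : G.obj E3 ⟶ E3G)
    (hw2 : (T.map w2).app (G.obj (G.obj A.A)) ≫ ev3G =
      (T.obj (G.obj E3)).map (G.δ.app (G.obj A.A)) ≫ M.g2 E3 (G.obj (G.obj A.A)) ≫ G.map ev3)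
    (hinv : IsIso w1) (hepi : Epi w2) :
    IsIso w := by
  have hsplit := (Comonad.beckSplitEqualizer A).cloakCoequalizer h1G h2G h3G
  have hπ : G.map (h2.precomp ev3 (G.map A.a)) ≫ G.map (h1.precomp ev2 A.a) =
      G.map (h2.precomp ev3 (G.δ.app A.A)) ≫ G.map (h1.precomp ev2 A.a) := by
    rw [← G.map_comp, ← G.map_comp, ← h1.precomp_comp h2, ← h1.precomp_comp h2, A.coassoc]
  have : IsSplitEpi (h1.precomp ev2 A.a) :=
    ⟨⟨h2.precomp ev1 (G.ε.app A.A), h1.precomp_comp_precomp_of_comp_eq_id h2 A.counit⟩⟩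
  exact isIso_of_cofork_hom hπ hsplit.isCoequalizer w2 w1 w
    (IsWoodFusion.map_precomp_comp (G.δ.naturality A.a).symm h2 h2G hw1 hw2)
    (IsWoodFusion.map_precomp_comp (G.coassoc A.A) h2 h2G hw1 hw2)
    (IsWoodFusion.map_precomp_comp A.coassoc.symm h1 h1G hw hw1)

/-- Let `G` be a magmal comonad on a magmal category `C` with the
relevant left cloaks, and let `(Y, υ)` be a `G`-coalgebra and `Z ∈ C`.  Each Wood fusion
morphism `w = [coaction, 1] ∘ G₂ˡ : G[Y',Z] ⟶ [Y',GZ]` is characterized by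
`(w ⊗ 1) ≫ ev = (1 ⊗ coaction) ≫ G₂ ≫ G(ev)`.  If the fusion morphism `w₁ = w_{δ_Y,Z}`
at the cofree coalgebra on `Y` is invertible and the fusion morphism `w₂ = w_{δ_{GY},Z}`
at the cofree coalgebra on `GY` is an epimorphism, then the fusion morphism
`w = w_{υ,Z}` is invertible. -/
theorem wood_fusion_invertible (T : C ⥤ C ⥤ C) (G : Comonad C) (M : MagmalComonad T G)
    (A : G.Coalgebra) (Z : C)
    -- cloaks [Y,Z], [Y,GZ]
    (E1 : C) (ev1 : (T.obj E1).obj A.A ⟶ Z) (h1 : IsCloak T A.A Z E1 ev1)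
    (E1G : C) (ev1G : (T.obj E1G).obj A.A ⟶ G.obj Z) (h1G : IsCloak T A.A (G.obj Z) E1G ev1G)
    -- cloaks [GY,Z], [GY,GZ]
    (E2 : C) (ev2 : (T.obj E2).obj (G.obj A.A) ⟶ Z) (h2 : IsCloak T (G.obj A.A) Z E2 ev2)
    (E2G : C) (ev2G : (T.obj E2G).obj (G.obj A.A) ⟶ G.obj Z)
    (h2G : IsCloak T (G.obj A.A) (G.obj Z) E2G ev2G)
    -- cloaks [G²Y,Z], [G²Y,GZ]
    (E3 : C) (ev3 : (T.obj E3).obj (G.obj (G.obj A.A)) ⟶ Z)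
    (h3 : IsCloak T (G.obj (G.obj A.A)) Z E3 ev3)
    (E3G : C) (ev3G : (T.obj E3G).obj (G.obj (G.obj A.A)) ⟶ G.obj Z)
    (h3G : IsCloak T (G.obj (G.obj A.A)) (G.obj Z) E3G ev3G)
    -- the Wood fusion morphism `w_{υ,Z}`
    (w : G.obj E1 ⟶ E1G)
    (hw : (T.map w).app A.A ≫ ev1G =
      (T.obj (G.obj E1)).map A.a ≫ M.g2 E1 A.A ≫ G.map ev1)
    -- the Wood fusion morphism `w₁ = w_{δ_Y,Z}`
    (w1 : G.obj E2 ⟶ E2G)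
    (hw1 : (T.map w1).app (G.obj A.A) ≫ ev2G =
      (T.obj (G.obj E2)).map (G.δ.app A.A) ≫ M.g2 E2 (G.obj A.A) ≫ G.map ev2)
    -- the Wood fusion morphism `w₂ = w_{δ_{GY},Z}`
    (w2 : G.obj E3 ⟶ E3G)
    (hw2 : (T.map w2).app (G.obj (G.obj A.A)) ≫ ev3G =
      (T.obj (G.obj E3)).map (G.δ.app (G.obj A.A)) ≫ M.g2 E3 (G.obj (G.obj A.A)) ≫ G.map ev3)
    (hinv : IsIso w1) (hepi : Epi w2) :
    IsIso w :=
  wood_fusion_invertible_general T G M A Z E1 ev1 h1 E1G ev1G h1G E2 ev2 h2 E2G ev2G h2G E3 ev3 E3G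
    ev3G h3G w hw w1 hw1 w2 hw2 hinv hepi

end WoodStmt5
end

section
/- Let T be an opmagmal monad on a magmal category C (a monad T with natural maps T₂ : T(X⊗Y) → TX ⊗ TY compatible with η and μ), and suppose T has a right adjoint G, which then carries a canonical comonad and magmal structure via mates. Let (Y,β) be a T-algebra corresponding under the adjunction to the G-coalgebra (Y,υ). Then the T-fusion morphism v_{X,β} = (1 ⊗ β) ∘ T₂ : T(X⊗Y) → TX ⊗ Y is invertible for all X ∈ C if and only if the Wood G-fusion morphism w_{υ,Z} = [υ,1] ∘ G₂ˡ : G[Y,Z] → [Y,GZ] is invertible for all Z ∈ C (assuming C has all relevant left cloaks [Y,-], [GY,-]). -/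
open CategoryTheory

namespace WoodStmt6

variable {C : Type*} [Category C]

/-- `(E, ev)` is a left cloak of `Z` by `Y` for the tensor `T`. -/
def IsCloak (T : C ⥤ C ⥤ C) (Y Z E : C) (ev : (T.obj E).obj Y ⟶ Z) : Prop :=
  ∀ (X : C) (f : (T.obj X).obj Y ⟶ Z), ∃! g : X ⟶ E, (T.map g).app Y ≫ ev = f


lemma cloak_bijective {C : Type*} [Category C] {T : C ⥤ C ⥤ C} {Y Z E : C}
    {ev : (T.obj E).obj Y ⟶ Z} (h : IsCloak T Y Z E ev) (X : C) :
    Function.Bijective (fun g : X ⟶ E => (T.map g).app Y ≫ ev) := by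
  constructor
  · intro a b hab
    obtain ⟨g, -, hu⟩ := h X ((T.map b).app Y ≫ ev)
    rw [hu a hab, hu b rfl]
  · intro f
    obtain ⟨g, hg, -⟩ := h X f
    exact ⟨g, hg⟩

lemma precomp_bijective {C : Type*} [Category C] {A B : C} (v : A ⟶ B) [IsIso v] (Z : C) :
    Function.Bijective (fun f : B ⟶ Z => v ≫ f) := by
  constructor
  · intro a b hab
    exact (cancel_epi v).mp hab
  · intro f
    exact ⟨inv v ≫ f, by simp⟩

lemma postcomp_bijective {C : Type*} [Category C] {A B : C} (v : A ⟶ B) [IsIso v] (W : C) :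
    Function.Bijective (fun f : W ⟶ A => f ≫ v) := by
  constructor
  · intro a b hab
    exact (cancel_mono v).mp hab
  · intro f
    exact ⟨f ≫ inv v, by simp⟩

/-- Let `T` be the tensor of a magmal category `C`, `M` an opmagmal
monad on `C` (with opmagmal structure `t2 : M(X ⊗ Y) ⟶ M X ⊗ M Y` compatible with `η`
and `μ`), and `G` a right-adjoint comonad of `M`, with counit, comultiplication and
magmal structure `g2` the mates of `η`, `μ`, `t2` under the adjunction.  Let `(Y, β)` be
an `M`-algebra and `υ = homEquiv β` the corresponding `G`-coalgebra structure.  Then the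
`M`-fusion morphisms `v_X = (1 ⊗ β) ∘ T₂` are invertible for all `X` iff the Wood
`G`-fusion morphisms `w_Z = [υ,1] ∘ G₂ˡ : G[Y,Z] ⟶ [Y,GZ]` are invertible for all `Z`
(given all the cloaks `[Y,Z]` and `[Y,GZ]`). -/
theorem opmagmal_fusion_iff_wood_fusion
    (T : C ⥤ C ⥤ C) (M : Monad C) (G : Comonad C)
    (adj : (M : C ⥤ C) ⊣ (G : C ⥤ C))
    -- the comonad structure on `G` is obtained from that of `M` by mates
    (hε : ∀ X : C, G.ε.app X = M.η.app (G.obj X) ≫ adj.counit.app X)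
    (hδ : ∀ X : C, G.δ.app X =
      (adj.homEquiv (G.obj X) (G.obj X))
        ((adj.homEquiv (M.obj (G.obj X)) X) (M.μ.app (G.obj X) ≫ adj.counit.app X)))
    -- the opmagmal structure of the monad `M`
    (t2 : ∀ X Y : C, M.obj ((T.obj X).obj Y) ⟶ (T.obj (M.obj X)).obj (M.obj Y))
    (t2natl : ∀ {X X' : C} (Y : C) (f : X ⟶ X'),
      M.map ((T.map f).app Y) ≫ t2 X' Y = t2 X Y ≫ (T.map (M.map f)).app (M.obj Y))
    (t2natr : ∀ (X : C) {Y Y' : C} (g : Y ⟶ Y'),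
      M.map ((T.obj X).map g) ≫ t2 X Y' = t2 X Y ≫ (T.obj (M.obj X)).map (M.map g))
    (t2η : ∀ X Y : C, M.η.app ((T.obj X).obj Y) ≫ t2 X Y =
      (T.map (M.η.app X)).app Y ≫ (T.obj (M.obj X)).map (M.η.app Y))
    (t2μ : ∀ X Y : C, M.μ.app ((T.obj X).obj Y) ≫ t2 X Y =
      M.map (t2 X Y) ≫ t2 (M.obj X) (M.obj Y) ≫
        (T.map (M.μ.app X)).app (M.obj (M.obj Y)) ≫ (T.obj (M.obj X)).map (M.μ.app Y))
    -- the magmal structure of `G`, the mate of `t2`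
    (g2 : ∀ X Y : C, (T.obj (G.obj X)).obj (G.obj Y) ⟶ G.obj ((T.obj X).obj Y))
    (hg2 : ∀ X Y : C, g2 X Y =
      (adj.homEquiv ((T.obj (G.obj X)).obj (G.obj Y)) ((T.obj X).obj Y))
        (t2 (G.obj X) (G.obj Y) ≫ (T.map (adj.counit.app X)).app (M.obj (G.obj Y)) ≫
          (T.obj X).map (adj.counit.app Y)))
    -- an `M`-algebra `(Y, β)` and the corresponding `G`-coalgebra structure `υ`
    (B : M.Algebra) (υ : B.A ⟶ G.obj B.A) (hυ : υ = (adj.homEquiv B.A B.A) B.a)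
    -- the cloaks `[Y,Z]` and `[Y,GZ]`
    (E1 : C → C) (ev1 : ∀ Z : C, (T.obj (E1 Z)).obj B.A ⟶ Z)
    (h1 : ∀ Z : C, IsCloak T B.A Z (E1 Z) (ev1 Z))
    (EG : C → C) (evG : ∀ Z : C, (T.obj (EG Z)).obj B.A ⟶ G.obj Z)
    (hG : ∀ Z : C, IsCloak T B.A (G.obj Z) (EG Z) (evG Z))
    -- the Wood fusion morphisms `w_Z = [υ,1] ∘ G₂ˡ`
    (w : ∀ Z : C, G.obj (E1 Z) ⟶ EG Z)
    (hw : ∀ Z : C, (T.map (w Z)).app B.A ≫ evG Z =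
      (T.obj (G.obj (E1 Z))).map υ ≫ g2 (E1 Z) B.A ≫ G.map (ev1 Z)) :
    (∀ X : C, IsIso (t2 X B.A ≫ (T.obj (M.obj X)).map B.a)) ↔
      (∀ Z : C, IsIso (w Z)) := by
  have hβυ : M.map υ ≫ adj.counit.app B.A = B.a := by
    have := (adj.homEquiv B.A B.A).symm_apply_apply B.a
    rw [Adjunction.homEquiv_counit] at this
    rw [hυ]; exact this
  -- The key "mate" computation relating the two fusion morphisms.
  have key : ∀ (X Z : C) (g : M.obj X ⟶ E1 Z),
      (T.map ((adj.homEquiv X (E1 Z)) g ≫ w Z)).app B.A ≫ evG Z =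
      (adj.homEquiv ((T.obj X).obj B.A) Z)
        ((t2 X B.A ≫ (T.obj (M.obj X)).map B.a) ≫ (T.map g).app B.A ≫ ev1 Z) := by
    intro X Z g
    rw [T.map_comp, NatTrans.comp_app, Category.assoc, hw Z, ← Category.assoc,
      ← (T.map ((adj.homEquiv X (E1 Z)) g)).naturality υ, hg2,
      Category.assoc, ← Adjunction.homEquiv_naturality_right,
      ← Adjunction.homEquiv_naturality_left, ← Adjunction.homEquiv_naturality_left]
    congr 1
    simp only [Category.assoc]
    rw [reassoc_of% (t2natl (G.obj B.A) ((adj.homEquiv X (E1 Z)) g))]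
    rw [reassoc_of% (t2natr X υ)]
    have h3 : (T.map (M.map ((adj.homEquiv X (E1 Z)) g))).app (M.obj (G.obj B.A)) ≫
        (T.map (adj.counit.app (E1 Z))).app (M.obj (G.obj B.A)) =
        (T.map g).app (M.obj (G.obj B.A)) := by
      rw [← NatTrans.comp_app, ← T.map_comp]
      have := (adj.homEquiv X (E1 Z)).symm_apply_apply g
      rw [Adjunction.homEquiv_counit] at this
      rw [this]
    rw [reassoc_of% h3]
    rw [reassoc_of% ((T.map g).naturality (M.map υ))]
    have h5 : (T.obj (E1 Z)).map (M.map υ) ≫ (T.obj (E1 Z)).map (adj.counit.app B.A) =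
        (T.obj (E1 Z)).map B.a := by rw [← Functor.map_comp, hβυ]
    rw [reassoc_of% h5, reassoc_of% ((T.map g).naturality B.a)]
  constructor
  · -- fusion invertible ⟹ Wood fusion invertible
    intro hv Z
    apply isIso_of_yoneda_map_bijective
    intro W
    haveI : IsIso (t2 W B.A ≫ (T.obj (M.obj W)).map B.a) := hv W
    have eGb := cloak_bijective (hG Z) W
    let eG : (W ⟶ EG Z) ≃ ((T.obj W).obj B.A ⟶ G.obj Z) := Equiv.ofBijective _ eGb
    have hfun : (fun x : W ⟶ G.obj (E1 Z) => x ≫ w Z) =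
        eG.symm ∘ (adj.homEquiv ((T.obj W).obj B.A) Z) ∘
          (fun f => (t2 W B.A ≫ (T.obj (M.obj W)).map B.a) ≫ f) ∘
          (fun g : M.obj W ⟶ E1 Z => (T.map g).app B.A ≫ ev1 Z) ∘
          (adj.homEquiv W (E1 Z)).symm := by
      funext x
      apply eG.injective
      simp only [Function.comp_apply, Equiv.apply_symm_apply]
      show (T.map (x ≫ w Z)).app B.A ≫ evG Z = _
      conv_lhs => rw [← (adj.homEquiv W (E1 Z)).apply_symm_apply x]
      exact key W Z ((adj.homEquiv W (E1 Z)).symm x)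
    rw [hfun]
    exact eG.symm.bijective.comp ((adj.homEquiv _ _).bijective.comp
      ((precomp_bijective _ _).comp ((cloak_bijective (h1 Z) (M.obj W)).comp
        (adj.homEquiv W (E1 Z)).symm.bijective)))
  · -- Wood fusion invertible ⟹ fusion invertible
    intro hwiso X
    apply isIso_of_coyoneda_map_bijective
    intro Z
    haveI : IsIso (w Z) := hwiso Z
    let e1 : (M.obj X ⟶ E1 Z) ≃ ((T.obj (M.obj X)).obj B.A ⟶ Z) :=
      Equiv.ofBijective _ (cloak_bijective (h1 Z) (M.obj X))
    have hfun : (fun f : (T.obj (M.obj X)).obj B.A ⟶ Z =>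
          (t2 X B.A ≫ (T.obj (M.obj X)).map B.a) ≫ f) =
        (adj.homEquiv ((T.obj X).obj B.A) Z).symm ∘
          (fun k : X ⟶ EG Z => (T.map k).app B.A ≫ evG Z) ∘
          (fun x : X ⟶ G.obj (E1 Z) => x ≫ w Z) ∘
          (adj.homEquiv X (E1 Z)) ∘ e1.symm := by
      funext f
      simp only [Function.comp_apply]
      rw [Equiv.eq_symm_apply]
      have hf : (T.map (e1.symm f)).app B.A ≫ ev1 Z = f := e1.apply_symm_apply f
      conv_lhs => rw [← hf]
      exact (key X Z (e1.symm f)).symm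
    rw [hfun]
    exact (adj.homEquiv _ _).symm.bijective.comp ((cloak_bijective (hG Z) X).comp
      ((postcomp_bijective (w Z) _).comp ((adj.homEquiv X (E1 Z)).bijective.comp
        e1.symm.bijective)))


end WoodStmt6
end

section
/- Let Γ be a procomonad on a category C and W : D → C a functor. Define Γ_W(D', D) := Γ(W D', W D) with the induced counit and comultiplication (the lifting of Γ through W in profunctors). Then the square formed by the underlying functors und : D^{Γ_W} → D, und : C^Γ → C, the induced functor D^{Γ_W} → C^Γ, and W : D → C is a pullback of categories. -/
open CategoryTheory

namespace WoodStmt11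

variable {C : Type*} [Category C]

/-- A procomonad on `C`: a profunctor `Γ : C ⇸ C` (given by `P` with its two-sided
functorial action) equipped with a counit `ε : Γ(X,Y) → C(X,Y)` and a comultiplication
`δ : Γ(X,Y) → ∫^U Γ(U,Y) × Γ(X,U)` into the coend describing `Γ ∘ Γ`. -/
structure ProComonad (C : Type*) [Category C] where
  P : C → C → Type*
  map : ∀ {X X' Y Y'}, (X' ⟶ X) → (Y ⟶ Y') → P X Y → P X' Y'
  map_id : ∀ (X Y : C) (p : P X Y), map (𝟙 X) (𝟙 Y) p = p
  map_comp : ∀ {X X' X'' Y Y' Y'' : C} (f : X'' ⟶ X') (f' : X' ⟶ X)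
    (g : Y ⟶ Y') (g' : Y' ⟶ Y'') (p : P X Y),
    map f g' (map f' g p) = map (f ≫ f') (g ≫ g') p
  eps : ∀ {X Y}, P X Y → (X ⟶ Y)
  eps_natural : ∀ {X X' Y Y'} (f : X' ⟶ X) (g : Y ⟶ Y') (p : P X Y),
    eps (map f g p) = f ≫ eps p ≫ g
  dlt : ∀ {X Y}, P X Y →
    Quot (fun (p q : Σ U : C, P U Y × P X U) =>
      ∃ g : p.1 ⟶ q.1, p.2.1 = map g (𝟙 Y) q.2.1 ∧ q.2.2 = map (𝟙 X) g p.2.2)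

theorem comp_cond (Γ : ProComonad C) {A B D : C} (a : Γ.P A A) (b : Γ.P B B) (d : Γ.P D D)
    (f : A ⟶ B) (g : B ⟶ D)
    (hf : Γ.map (𝟙 A) f a = Γ.map f (𝟙 B) b)
    (hg : Γ.map (𝟙 B) g b = Γ.map g (𝟙 D) d) :
    Γ.map (𝟙 A) (f ≫ g) a = Γ.map (f ≫ g) (𝟙 D) d := by
  have e1 := Γ.map_comp (𝟙 A) (𝟙 A) f g a
  simp only [Category.id_comp] at e1
  have e2 := Γ.map_comp (𝟙 A) f (𝟙 B) g b
  simp only [Category.id_comp] at e2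
  have e3 := Γ.map_comp f g (𝟙 D) (𝟙 D) d
  simp only [Category.comp_id] at e3
  have e4 := Γ.map_comp f (𝟙 B) g (𝟙 D) b
  simp only [Category.comp_id] at e4
  rw [← e1, hf, e2, ← e3, ← hg, e4]

/-- A `Γ`-algebra: an object with a coaction `γ ∈ Γ(C₀,C₀)` with `ε(γ) = 1` and
`δ(γ) = ⟦(γ, γ)⟧`. -/
structure GammaAlg (Γ : ProComonad C) where
  C0 : C
  γ : Γ.P C0 C0
  counit : Γ.eps γ = 𝟙 C0
  comult : Γ.dlt γ = Quot.mk _ ⟨C0, γ, γ⟩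

instance (Γ : ProComonad C) : Category (GammaAlg Γ) where
  Hom A B := { f : A.C0 ⟶ B.C0 // Γ.map (𝟙 A.C0) f A.γ = Γ.map f (𝟙 B.C0) B.γ }
  id A := ⟨𝟙 A.C0, rfl⟩
  comp {A B D} f g := ⟨f.1 ≫ g.1, comp_cond Γ A.γ B.γ D.γ f.1 g.1 f.2 g.2⟩
  id_comp f := by apply Subtype.ext; exact Category.id_comp f.1
  comp_id f := by apply Subtype.ext; exact Category.comp_id f.1
  assoc f g h := by apply Subtype.ext; exact Category.assoc f.1 g.1 h.1

/-- The underlying-object functor. -/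
def und (Γ : ProComonad C) : GammaAlg Γ ⥤ C where
  obj A := A.C0
  map f := f.1

variable {D : Type*} [Category D]

/-- Algebras for the lifted procomonad `Γ_W = W* ∘ Γ ∘ W_*` on `D`, where
`Γ_W(D',D) = Γ(W D', W D)`. -/
structure GammaWAlg (Γ : ProComonad C) (W : D ⥤ C) where
  D0 : D
  γ : Γ.P (W.obj D0) (W.obj D0)
  counit : Γ.eps γ = 𝟙 (W.obj D0)
  comult : Γ.dlt γ = Quot.mk _ ⟨W.obj D0, γ, γ⟩

instance (Γ : ProComonad C) (W : D ⥤ C) : Category (GammaWAlg Γ W) where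
  Hom A B := { f : A.D0 ⟶ B.D0 //
    Γ.map (𝟙 (W.obj A.D0)) (W.map f) A.γ = Γ.map (W.map f) (𝟙 (W.obj B.D0)) B.γ }
  id A := ⟨𝟙 A.D0, by rw [W.map_id]⟩
  comp {A B E} f g := ⟨f.1 ≫ g.1, by
    rw [W.map_comp]
    exact comp_cond Γ A.γ B.γ E.γ (W.map f.1) (W.map g.1) f.2 g.2⟩
  id_comp f := by apply Subtype.ext; exact Category.id_comp f.1
  comp_id f := by apply Subtype.ext; exact Category.comp_id f.1
  assoc f g h := by apply Subtype.ext; exact Category.assoc f.1 g.1 h.1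

/-- The underlying-object functor for `Γ_W`-algebras. -/
def undW (Γ : ProComonad C) (W : D ⥤ C) : GammaWAlg Γ W ⥤ D where
  obj A := A.D0
  map f := f.1

/-- The comparison functor `D^{Γ_W} ⥤ C^Γ` over `W`. -/
def cmp (Γ : ProComonad C) (W : D ⥤ C) : GammaWAlg Γ W ⥤ GammaAlg Γ where
  obj A := ⟨W.obj A.D0, A.γ, A.counit, A.comult⟩
  map f := ⟨W.map f.1, f.2⟩
  map_id A := by
    apply Subtype.ext
    show W.map (𝟙 A.D0) = 𝟙 (W.obj A.D0)
    simp
  map_comp f g := by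
    apply Subtype.ext
    show W.map (f.1 ≫ g.1) = W.map f.1 ≫ W.map g.1
    simp

/-!
A `Γ_W`-algebra is the same thing as an object `d` of `D` together with a `Γ`-algebra structure
on `W d`, and a morphism of `Γ_W`-algebras is a morphism `f` of `D` such that `W f` is a morphism
of `Γ`-algebras. So `cmp` and `undW` jointly determine objects and `undW` is faithful, which gives
uniqueness; a cone `(Pf, Q)` lifts by transporting the coaction of `Pf e` along
`(Pf e).C0 = W (Q e)`.
-/

theorem _root_.CategoryTheory.Functor.ext_of_comp_faithful {A B E : Type*} [Category A]
    [Category B] [Category E] {F G : E ⥤ A} (H : A ⥤ B) [H.Faithful]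
    (hobj : ∀ e, F.obj e = G.obj e) (hcomp : F ⋙ H = G ⋙ H) : F = G :=
  CategoryTheory.Functor.ext hobj fun e e' f => H.map_injective <| by
    simpa [eqToHom_map] using Functor.congr_hom hcomp f

section Lift

variable {Γ : ProComonad C} {W : D ⥤ C}

instance : (und Γ).Faithful where
  map_injective := Subtype.ext

instance : (undW Γ W).Faithful where
  map_injective := Subtype.ext

theorem cmp_comp_und : cmp Γ W ⋙ und Γ = undW Γ W ⋙ W := rfl

def GammaWAlg.ofGammaAlg (A : GammaAlg Γ) (d : D) (h : A.C0 = W.obj d) : GammaWAlg Γ W where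
  D0 := d
  γ := h ▸ A.γ
  counit := by cases A; cases h; assumption
  comult := by cases A; cases h; assumption

theorem cmp_obj_ofGammaAlg (A : GammaAlg Γ) (d : D) (h : A.C0 = W.obj d) :
    (cmp Γ W).obj (GammaWAlg.ofGammaAlg A d h) = A := by
  cases A
  cases h
  rfl

theorem GammaWAlg.ext_of_cmp_obj {X Y : GammaWAlg Γ W} (hD0 : X.D0 = Y.D0)
    (hcmp : (cmp Γ W).obj X = (cmp Γ W).obj Y) : X = Y := by
  obtain ⟨d, γ, _, _⟩ := X
  obtain ⟨_, γ', _, _⟩ := Y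
  subst hD0
  obtain rfl : γ = γ' := eq_of_heq (GammaAlg.mk.inj hcmp).2
  rfl

-- The hom condition of `Γ_W`-algebras at `f` is that of `Γ`-algebras at `W.map f`.
def GammaWAlg.homMk {X Y : GammaWAlg Γ W} {A B : GammaAlg Γ} (hX : (cmp Γ W).obj X = A)
    (hY : (cmp Γ W).obj Y = B) (f : X.D0 ⟶ Y.D0) (u : A ⟶ B) (hu : u.1 ≍ W.map f) : X ⟶ Y :=
  ⟨f, by subst hX hY; exact eq_of_heq hu ▸ u.2⟩

variable {E : Type*} [Category E] (Pf : E ⥤ GammaAlg Γ) (Q : E ⥤ D) (h : Pf ⋙ und Γ = Q ⋙ W)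

def pullbackLift : E ⥤ GammaWAlg Γ W where
  obj e := .ofGammaAlg (Pf.obj e) (Q.obj e) (Functor.congr_obj h e)
  map f := GammaWAlg.homMk (cmp_obj_ofGammaAlg _ _ _) (cmp_obj_ofGammaAlg _ _ _) (Q.map f)
    (Pf.map f) (Functor.hcongr_hom h f)
  map_id e := Subtype.ext (Q.map_id e)
  map_comp f g := Subtype.ext (Q.map_comp f g)

theorem pullbackLift_comp_undW : pullbackLift Pf Q h ⋙ undW Γ W = Q :=
  Functor.hext (fun _ => rfl) (fun _ _ _ => HEq.rfl)

theorem pullbackLift_comp_cmp : pullbackLift Pf Q h ⋙ cmp Γ W = Pf :=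
  Functor.ext_of_comp_faithful (und Γ) (fun e => cmp_obj_ofGammaAlg _ _ _) <| by
    rw [Functor.assoc, cmp_comp_und, ← Functor.assoc, pullbackLift_comp_undW, h]

theorem eq_of_comp_cmp_of_comp_undW {R R' : E ⥤ GammaWAlg Γ W}
    (hcmp : R ⋙ cmp Γ W = R' ⋙ cmp Γ W) (hundW : R ⋙ undW Γ W = R' ⋙ undW Γ W) : R = R' :=
  Functor.ext_of_comp_faithful (undW Γ W)
    (fun e => GammaWAlg.ext_of_cmp_obj (Functor.congr_obj hundW e) (Functor.congr_obj hcmp e)) hundW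

end Lift

/-- For a procomonad `Γ` on `C` and a functor `W : D ⥤ C`, the square
formed by the underlying functors `D^{Γ_W} ⥤ D`, `C^Γ ⥤ C`, the comparison functor
`D^{Γ_W} ⥤ C^Γ` and `W : D ⥤ C` is a pullback of categories. -/
theorem gammaW_pullback (Γ : ProComonad C) (W : D ⥤ C) :
    cmp Γ W ⋙ und Γ = undW Γ W ⋙ W ∧
    ∀ {E : Type*} [Category E] (Pf : E ⥤ GammaAlg Γ) (Q : E ⥤ D),
      Pf ⋙ und Γ = Q ⋙ W →
      ∃! R : E ⥤ GammaWAlg Γ W, R ⋙ cmp Γ W = Pf ∧ R ⋙ undW Γ W = Q := by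
  refine ⟨cmp_comp_und, fun Pf Q h => ⟨pullbackLift Pf Q h,
    ⟨pullbackLift_comp_cmp Pf Q h, pullbackLift_comp_undW Pf Q h⟩, ?_⟩⟩
  rintro R ⟨hcmp, hundW⟩
  exact eq_of_comp_cmp_of_comp_undW (hcmp.trans (pullbackLift_comp_cmp Pf Q h).symm)
    (hundW.trans (pullbackLift_comp_undW Pf Q h).symm)

end WoodStmt11
end

section
/- Doctrinal adjunction, part 1: let (u, φ) : (A, s) → (B, t) be a monad morphism in a 2-category (u : A → B a 1-cell, φ : t u ⟹ u s a 2-cell compatible with units and multiplications), and suppose u has a left adjoint f with unit β : 1_B ⟹ u f and counit α : f u ⟹ 1_A. Then the mate φ̂ := (α s f) ∘ (f φ f) ∘ (f t β) : f t ⟹ s f makes (f, φ̂) a monad opmorphism (B, t) → (A, s), i.e., φ̂ is compatible with the units and multiplications of t and s. -/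
/-!
The mate correspondence `(t ≫ f ⟶ f ≫ s) ≃ (u ≫ t ⟶ s ≫ u)` is injective, natural in the
vertical 1-cells `t` and `s`, and turns vertical pasting of squares into vertical pasting.
Applying it to both sides of each opmorphism axiom for `φ̂` therefore yields exactly the
corresponding monad morphism axiom for `φ`.
-/

open CategoryTheory CategoryTheory.Bicategory

namespace WoodStmt13

variable {B : Type*} [Bicategory B]

/-- Monad axioms for `(s, η, μ)` on an object of a bicategory. -/
def IsMonad {a : B} (s : a ⟶ a) (η : 𝟙 a ⟶ s) (μ : s ≫ s ⟶ s) : Prop :=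
  (η ▷ s) ≫ μ = (λ_ s).hom ∧
  (s ◁ η) ≫ μ = (ρ_ s).hom ∧
  (μ ▷ s) ≫ μ = (α_ s s s).hom ≫ (s ◁ μ) ≫ μ

/-- The monad morphism axioms for `(u, φ) : (a, s) → (b, t)`, where
`φ : u ≫ t ⟶ s ≫ u` (i.e. `φ : t u ⟹ u s`). -/
def IsMonadMorphism {a b : B} (s : a ⟶ a) (ηs : 𝟙 a ⟶ s) (μs : s ≫ s ⟶ s)
    (t : b ⟶ b) (ηt : 𝟙 b ⟶ t) (μt : t ≫ t ⟶ t)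
    (u : a ⟶ b) (φ : u ≫ t ⟶ s ≫ u) : Prop :=
  (u ◁ ηt) ≫ φ = (ρ_ u).hom ≫ (λ_ u).inv ≫ (ηs ▷ u) ∧
  (u ◁ μt) ≫ φ =
    (α_ u t t).inv ≫ (φ ▷ t) ≫ (α_ s u t).hom ≫ (s ◁ φ) ≫ (α_ s s u).inv ≫ (μs ▷ u)

/-- The monad opmorphism axioms for `(f, ψ) : (b, t) → (a, s)`, where
`ψ : t ≫ f ⟶ f ≫ s` (i.e. `ψ : f t ⟹ s f`). -/
def IsMonadOpmorphism {a b : B} (s : a ⟶ a) (ηs : 𝟙 a ⟶ s) (μs : s ≫ s ⟶ s)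
    (t : b ⟶ b) (ηt : 𝟙 b ⟶ t) (μt : t ≫ t ⟶ t)
    (f : b ⟶ a) (ψ : t ≫ f ⟶ f ≫ s) : Prop :=
  (ηt ▷ f) ≫ ψ = (λ_ f).hom ≫ (ρ_ f).inv ≫ (f ◁ ηs) ∧
  (μt ▷ f) ≫ ψ =
    (α_ t t f).hom ≫ (t ◁ ψ) ≫ (α_ t f s).inv ≫ (ψ ▷ s) ≫ (α_ f s s).hom ≫ (f ◁ μs)

/-- The mate `φ̂ = (α s f) ∘ (f φ f) ∘ (f t β) : f t ⟹ s f` of `φ : t u ⟹ u s` under an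
adjunction `f ⊣ u`. -/
def mate {a b : B} (s : a ⟶ a) (t : b ⟶ b) (u : a ⟶ b) (f : b ⟶ a)
    (adj : Bicategory.Adjunction f u) (φ : u ≫ t ⟶ s ≫ u) : t ≫ f ⟶ f ≫ s :=
  (λ_ (t ≫ f)).inv ≫ (adj.unit ▷ (t ≫ f)) ≫ (α_ f u (t ≫ f)).hom ≫
    (f ◁ (α_ u t f).inv) ≫ (f ◁ (φ ▷ f)) ≫ (f ◁ (α_ s u f).hom) ≫
    (f ◁ (s ◁ adj.counit)) ≫ (f ◁ (ρ_ s).hom)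

section MateNaturality

variable {c d e f : B} {l₁ : c ⟶ d} {r₁ : d ⟶ c} {l₂ : e ⟶ f} {r₂ : f ⟶ e}
  (adj₁ : Bicategory.Adjunction l₁ r₁) (adj₂ : Bicategory.Adjunction l₂ r₂)

theorem mateEquiv_whiskerRight_comp {g g' : c ⟶ e} {h : d ⟶ f} (θ : g' ⟶ g)
    (α : g ≫ l₂ ⟶ l₁ ≫ h) :
    mateEquiv adj₁ adj₂ (θ ▷ l₂ ≫ α) = r₁ ◁ θ ≫ mateEquiv adj₁ adj₂ α := by
  simp only [mateEquiv_apply']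
  calc _ = 𝟙 _ ⊗≫ r₁ ◁ (g' ◁ adj₂.unit ≫ θ ▷ (l₂ ≫ r₂)) ⊗≫ r₁ ◁ α ▷ r₂ ⊗≫
        adj₁.counit ▷ h ▷ r₂ ⊗≫ 𝟙 _ := by bicategory
    _ = _ := by rw [whisker_exchange]; bicategory

theorem mateEquiv_comp_whiskerLeft {g : c ⟶ e} {h h' : d ⟶ f} (α : g ≫ l₂ ⟶ l₁ ≫ h)
    (κ : h ⟶ h') :
    mateEquiv adj₁ adj₂ (α ≫ l₁ ◁ κ) = mateEquiv adj₁ adj₂ α ≫ κ ▷ r₂ := by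
  simp only [mateEquiv_apply']
  calc _ = 𝟙 _ ⊗≫ r₁ ◁ g ◁ adj₂.unit ⊗≫ r₁ ◁ α ▷ r₂ ⊗≫
        ((r₁ ≫ l₁) ◁ κ ▷ r₂ ≫ adj₁.counit ▷ (h' ≫ r₂)) ⊗≫ 𝟙 _ := by bicategory
    _ = _ := by rw [whisker_exchange]; bicategory

end MateNaturality

theorem mate_eq_mateEquiv_symm {a b : B} (s : a ⟶ a) (t : b ⟶ b) (u : a ⟶ b) (f : b ⟶ a)
    (adj : Bicategory.Adjunction f u) (φ : u ≫ t ⟶ s ≫ u) :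
    mate s t u f adj φ = (mateEquiv adj adj).symm φ := by
  rw [mateEquiv_symm_apply', mate]
  bicategory

theorem doctrinal_adjunction_part1_general {a b : B}
    (s : a ⟶ a) (ηs : 𝟙 a ⟶ s) (μs : s ≫ s ⟶ s)
    (t : b ⟶ b) (ηt : 𝟙 b ⟶ t) (μt : t ≫ t ⟶ t)
    (u : a ⟶ b) (φ : u ≫ t ⟶ s ≫ u)
    (hφ : IsMonadMorphism s ηs μs t ηt μt u φ)
    (f : b ⟶ a) (adj : Bicategory.Adjunction f u) :
    IsMonadOpmorphism s ηs μs t ηt μt f (mate s t u f adj φ) := by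
  obtain ⟨hφ_unit, hφ_mul⟩ := hφ
  have hψ : mateEquiv adj adj (mate s t u f adj φ) = φ := by
    rw [mate_eq_mateEquiv_symm, Equiv.apply_symm_apply]
  set ψ := mate s t u f adj φ
  refine ⟨(mateEquiv adj adj).injective ?_, (mateEquiv adj adj).injective ?_⟩
  · calc mateEquiv adj adj (ηt ▷ f ≫ ψ) = u ◁ ηt ≫ φ := by
          rw [mateEquiv_whiskerRight_comp, hψ]
      _ = ((ρ_ u).hom ≫ (λ_ u).inv) ≫ ηs ▷ u := by rw [hφ_unit, Category.assoc]
      _ = mateEquiv adj adj (((λ_ f).hom ≫ (ρ_ f).inv) ≫ f ◁ ηs) := by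
          rw [mateEquiv_comp_whiskerLeft, mateEquiv_leftUnitor_hom_rightUnitor_inv]
      _ = _ := by rw [Category.assoc]
  · calc mateEquiv adj adj (μt ▷ f ≫ ψ) = u ◁ μt ≫ φ := by
          rw [mateEquiv_whiskerRight_comp, hψ]
      _ = rightAdjointSquare.vcomp φ φ ≫ μs ▷ u := by
          rw [hφ_mul]; simp only [rightAdjointSquare.vcomp, Category.assoc]
      _ = mateEquiv adj adj (leftAdjointSquare.vcomp ψ ψ ≫ f ◁ μs) := by
          rw [mateEquiv_comp_whiskerLeft, Bicategory.mateEquiv_vcomp, hψ]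
      _ = _ := by simp only [leftAdjointSquare.vcomp, Category.assoc]

/-- (Doctrinal adjunction, part 1.) If `(u, φ) : (a, s) → (b, t)` is a
monad morphism in a bicategory and `f ⊣ u`, then the mate `φ̂ : f t ⟹ s f` of `φ` makes
`(f, φ̂)` a monad opmorphism `(b, t) → (a, s)`. -/
theorem doctrinal_adjunction_part1 {a b : B}
    (s : a ⟶ a) (ηs : 𝟙 a ⟶ s) (μs : s ≫ s ⟶ s)
    (t : b ⟶ b) (ηt : 𝟙 b ⟶ t) (μt : t ≫ t ⟶ t)
    (hs : IsMonad s ηs μs) (ht : IsMonad t ηt μt)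
    (u : a ⟶ b) (φ : u ≫ t ⟶ s ≫ u)
    (hφ : IsMonadMorphism s ηs μs t ηt μt u φ)
    (f : b ⟶ a) (adj : Bicategory.Adjunction f u) :
    IsMonadOpmorphism s ηs μs t ηt μt f (mate s t u f adj φ) :=
  doctrinal_adjunction_part1_general s ηs μs t ηt μt u φ hφ f adj

end WoodStmt13
end

section
/- Doctrinal adjunction, part 2: a monad morphism (u, φ) : (A, s) → (B, t) in a 2-category has a left adjoint in the 2-category Mnd(𝒞) of monads, monad morphisms, and monad 2-cells if and only if u has a left adjoint f in 𝒞 and the mate φ̂ : f t ⟹ s f of φ (using the unit and counit of f ⊣ u) is invertible. In that case the left adjoint is (f, φ̂⁻¹) and the unit and counit of f ⊣ u are monad 2-cells. -/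
/-!
Identify `φ̂` with `(mateEquiv adj adj).symm φ`. The mate bijection is natural in the vertical
1-cells and compatible with vertical pasting, so it carries the unit and multiplication laws
of `φ` to the corresponding laws of `φ̂`; inverting `φ̂` turns these into the monad-morphism
laws of `ψ`. Through the bijections `homEquiv₂` and `homEquiv₁` of `f ⊣ u`, the unit being a
2-cell of `Mnd(𝒞)` reads `φ̂ ≫ ψ = 𝟙`, and the counit being one reads `ψ ≫ φ̂ = 𝟙`.
-/

open CategoryTheory CategoryTheory.Bicategory

namespace WoodStmt14

variable {B : Type*} [Bicategory B]

/-- Monad axioms for `(s, η, μ)` on an object of a bicategory. -/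
def IsMonad {a : B} (s : a ⟶ a) (η : 𝟙 a ⟶ s) (μ : s ≫ s ⟶ s) : Prop :=
  (η ▷ s) ≫ μ = (λ_ s).hom ∧
  (s ◁ η) ≫ μ = (ρ_ s).hom ∧
  (μ ▷ s) ≫ μ = (α_ s s s).hom ≫ (s ◁ μ) ≫ μ

/-- The monad morphism axioms for a 1-cell `g : (x, m) → (y, n)` of `Mnd(𝒞)` with 2-cell
`χ : g ≫ n ⟶ m ≫ g` (i.e. `χ : n g ⟹ g m`). -/
def IsMndMor {x y : B} (m : x ⟶ x) (ηm : 𝟙 x ⟶ m) (μm : m ≫ m ⟶ m)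
    (n : y ⟶ y) (ηn : 𝟙 y ⟶ n) (μn : n ≫ n ⟶ n)
    (g : x ⟶ y) (χ : g ≫ n ⟶ m ≫ g) : Prop :=
  (g ◁ ηn) ≫ χ = (ρ_ g).hom ≫ (λ_ g).inv ≫ (ηm ▷ g) ∧
  (g ◁ μn) ≫ χ =
    (α_ g n n).inv ≫ (χ ▷ n) ≫ (α_ m g n).hom ≫ (m ◁ χ) ≫ (α_ m m g).inv ≫ (μm ▷ g)

/-- The mate `φ̂ : f t ⟹ s f` of `φ : t u ⟹ u s` under an adjunction `f ⊣ u`. -/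
def mate {a b : B} (s : a ⟶ a) (t : b ⟶ b) (u : a ⟶ b) (f : b ⟶ a)
    (adj : Bicategory.Adjunction f u) (φ : u ≫ t ⟶ s ≫ u) : t ≫ f ⟶ f ≫ s :=
  (λ_ (t ≫ f)).inv ≫ (adj.unit ▷ (t ≫ f)) ≫ (α_ f u (t ≫ f)).hom ≫
    (f ◁ (α_ u t f).inv) ≫ (f ◁ (φ ▷ f)) ≫ (f ◁ (α_ s u f).hom) ≫
    (f ◁ (s ◁ adj.counit)) ≫ (f ◁ (ρ_ s).hom)

/-- The 2-cell of the composite morphism `(b,t) → (a,s) → (b,t)` in `Mnd(𝒞)`. -/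
def compCell {a b : B} (s : a ⟶ a) (t : b ⟶ b) (u : a ⟶ b) (φ : u ≫ t ⟶ s ≫ u)
    (f : b ⟶ a) (ψ : f ≫ s ⟶ t ≫ f) : (f ≫ u) ≫ t ⟶ t ≫ (f ≫ u) :=
  (α_ f u t).hom ≫ (f ◁ φ) ≫ (α_ f s u).inv ≫ (ψ ▷ u) ≫ (α_ t f u).hom

/-- The 2-cell of the composite morphism `(a,s) → (b,t) → (a,s)` in `Mnd(𝒞)`. -/
def compCell' {a b : B} (s : a ⟶ a) (t : b ⟶ b) (u : a ⟶ b) (φ : u ≫ t ⟶ s ≫ u)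
    (f : b ⟶ a) (ψ : f ≫ s ⟶ t ≫ f) : (u ≫ f) ≫ s ⟶ s ≫ (u ≫ f) :=
  (α_ u f s).hom ≫ (u ◁ ψ) ≫ (α_ u t f).inv ≫ (φ ▷ f) ≫ (α_ s u f).hom

/-- `(f, ψ)` together with an adjunction `f ⊣ u` whose unit and counit are 2-cells of
`Mnd(𝒞)` is a left adjoint for `(u, φ)` in `Mnd(𝒞)`. -/
def IsMndLeftAdjoint {a b : B} (s : a ⟶ a) (ηs : 𝟙 a ⟶ s) (μs : s ≫ s ⟶ s)
    (t : b ⟶ b) (ηt : 𝟙 b ⟶ t) (μt : t ≫ t ⟶ t)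
    (u : a ⟶ b) (φ : u ≫ t ⟶ s ≫ u) (f : b ⟶ a) (ψ : f ≫ s ⟶ t ≫ f)
    (adj : Bicategory.Adjunction f u) : Prop :=
  IsMndMor t ηt μt s ηs μs f ψ ∧
  -- the unit `β : 𝟙 b ⟶ f ≫ u` is a 2-cell of `Mnd(𝒞)`
  ((adj.unit ▷ t) ≫ compCell s t u φ f ψ =
    ((λ_ t).hom ≫ (ρ_ t).inv) ≫ (t ◁ adj.unit)) ∧
  -- the counit `α : u ≫ f ⟶ 𝟙 a` is a 2-cell of `Mnd(𝒞)`
  ((adj.counit ▷ s) ≫ ((λ_ s).hom ≫ (ρ_ s).inv) =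
    compCell' s t u φ f ψ ≫ (s ◁ adj.counit))

section Mates

variable {c d e f : B} {l₁ : c ⟶ d} {r₁ : d ⟶ c} {l₂ : e ⟶ f} {r₂ : f ⟶ e}
  (adj₁ : l₁ ⊣ r₁) (adj₂ : l₂ ⊣ r₂)

theorem mateEquiv_whiskerRight_comp {g g' : c ⟶ e} {h : d ⟶ f} (γ : g' ⟶ g)
    (α : g ≫ l₂ ⟶ l₁ ≫ h) :
    mateEquiv adj₁ adj₂ (γ ▷ l₂ ≫ α) = r₁ ◁ γ ≫ mateEquiv adj₁ adj₂ α := by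
  simp only [mateEquiv_apply']
  calc _ = 𝟙 _ ⊗≫ r₁ ◁ (g' ◁ adj₂.unit ≫ γ ▷ (l₂ ≫ r₂)) ⊗≫ r₁ ◁ α ▷ r₂ ⊗≫
        adj₁.counit ▷ h ▷ r₂ ⊗≫ 𝟙 _ := by bicategory
    _ = _ := by rw [whisker_exchange]; bicategory

theorem mateEquiv_comp_whiskerLeft {g : c ⟶ e} {h h' : d ⟶ f} (α : g ≫ l₂ ⟶ l₁ ≫ h)
    (δ : h ⟶ h') :
    mateEquiv adj₁ adj₂ (α ≫ l₁ ◁ δ) = mateEquiv adj₁ adj₂ α ≫ δ ▷ r₂ := by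
  simp only [mateEquiv_apply']
  calc _ = 𝟙 _ ⊗≫ r₁ ◁ g ◁ adj₂.unit ⊗≫ r₁ ◁ α ▷ r₂ ⊗≫
        ((r₁ ≫ l₁) ◁ δ ▷ r₂ ≫ adj₁.counit ▷ (h' ≫ r₂)) ⊗≫ 𝟙 _ := by bicategory
    _ = _ := by rw [whisker_exchange]; bicategory

theorem homEquiv₁_eq_homEquiv₂_symm_mateEquiv {g : c ⟶ e} {h : d ⟶ f}
    (α : g ≫ l₂ ⟶ l₁ ≫ h) :
    adj₁.homEquiv₁ α = (α_ r₁ g l₂).inv ≫ adj₂.homEquiv₂.symm (mateEquiv adj₁ adj₂ α) := by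
  simp only [Adjunction.homEquiv₁_apply, Adjunction.homEquiv₂_symm_apply, mateEquiv_apply']
  symm
  calc _ = 𝟙 _ ⊗≫ r₁ ◁ g ◁ adj₂.unit ▷ l₂ ⊗≫ r₁ ◁ α ▷ r₂ ▷ l₂ ⊗≫
        (adj₁.counit ▷ (h ≫ r₂ ≫ l₂) ≫ 𝟙 _ ◁ h ◁ adj₂.counit) ⊗≫ 𝟙 _ := by bicategory
    _ = 𝟙 _ ⊗≫ r₁ ◁ g ◁ adj₂.unit ▷ l₂ ⊗≫
        r₁ ◁ (α ▷ (r₂ ≫ l₂) ≫ (l₁ ≫ h) ◁ adj₂.counit) ⊗≫ adj₁.counit ▷ h ⊗≫ 𝟙 _ := by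
      rw [← whisker_exchange]; bicategory
    _ = 𝟙 _ ⊗≫ r₁ ◁ g ◁ leftZigzag adj₂.unit adj₂.counit ⊗≫ r₁ ◁ α ⊗≫
        adj₁.counit ▷ h ⊗≫ 𝟙 _ := by
      rw [← whisker_exchange]; bicategory
    _ = _ := by rw [adj₂.left_triangle]; bicategory

end Mates

theorem isMndMor_inv_of_hom {x y : B} {m : x ⟶ x} {ηm : 𝟙 x ⟶ m} {μm : m ≫ m ⟶ m}
    {n : y ⟶ y} {ηn : 𝟙 y ⟶ n} {μn : n ≫ n ⟶ n} {g : x ⟶ y} (e : m ≫ g ≅ g ≫ n)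
    (hunit : ηm ▷ g ≫ e.hom = (λ_ g).hom ≫ (ρ_ g).inv ≫ g ◁ ηn)
    (hmul : μm ▷ g ≫ e.hom = leftAdjointSquare.vcomp e.hom e.hom ≫ g ◁ μn) :
    IsMndMor m ηm μm n ηn μn g e.inv := by
  rw [← Iso.eq_comp_inv] at hunit hmul
  constructor
  · simp [hunit]
  · simp [hmul, leftAdjointSquare.vcomp]

section MateOfMonadMorphism

variable {a b : B} {s : a ⟶ a} {t : b ⟶ b} {u : a ⟶ b} {f : b ⟶ a} (adj : f ⊣ u)
  (φ : u ≫ t ⟶ s ≫ u)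

theorem mate_eq_mateEquiv_symm : mate s t u f adj φ = (mateEquiv adj adj).symm φ := by
  rw [mate, mateEquiv_symm_apply']
  bicategory

theorem mateEquiv_mate : mateEquiv adj adj (mate s t u f adj φ) = φ := by
  rw [mate_eq_mateEquiv_symm, Equiv.apply_symm_apply]

theorem whiskerRight_unit_comp_mate {ηs : 𝟙 a ⟶ s} {ηt : 𝟙 b ⟶ t}
    (hφ : u ◁ ηt ≫ φ = (ρ_ u).hom ≫ (λ_ u).inv ≫ ηs ▷ u) :
    ηt ▷ f ≫ mate s t u f adj φ = (λ_ f).hom ≫ (ρ_ f).inv ≫ f ◁ ηs := by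
  apply (mateEquiv adj adj).injective
  rw [mateEquiv_whiskerRight_comp, mateEquiv_mate, ← Category.assoc, mateEquiv_comp_whiskerLeft,
    mateEquiv_leftUnitor_hom_rightUnitor_inv, hφ, Category.assoc]

theorem whiskerRight_mul_comp_mate {μs : s ≫ s ⟶ s} {μt : t ≫ t ⟶ t}
    (hφ : u ◁ μt ≫ φ =
      (α_ u t t).inv ≫ φ ▷ t ≫ (α_ s u t).hom ≫ s ◁ φ ≫ (α_ s s u).inv ≫ μs ▷ u) :
    μt ▷ f ≫ mate s t u f adj φ =
      leftAdjointSquare.vcomp (mate s t u f adj φ) (mate s t u f adj φ) ≫ f ◁ μs := by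
  apply (mateEquiv adj adj).injective
  rw [mateEquiv_whiskerRight_comp, mateEquiv_mate, hφ, mateEquiv_comp_whiskerLeft,
    Bicategory.mateEquiv_vcomp, mateEquiv_mate]
  simp [rightAdjointSquare.vcomp]

variable (ψ : f ≫ s ⟶ t ≫ f)

theorem whiskerRight_unit_comp_compCell :
    adj.unit ▷ t ≫ compCell s t u φ f ψ =
      (λ_ t).hom ≫ adj.homEquiv₂ (mate s t u f adj φ ≫ ψ) ≫ (α_ t f u).hom := by
  have h := (mateEquiv_eq_iff adj adj _ φ).mp (mateEquiv_mate adj φ)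
  calc _ = (λ_ t).hom ≫ adj.homEquiv₁.symm φ ≫ (α_ f s u).inv ≫ ψ ▷ u ≫ (α_ t f u).hom := by
        simp [compCell, Adjunction.homEquiv₁_symm_apply]
    _ = _ := by
        rw [h]
        simp [Adjunction.homEquiv₂_apply]

theorem compCell'_comp_whiskerLeft_counit :
    compCell' s t u φ f ψ ≫ s ◁ adj.counit =
      (α_ u f s).hom ≫ adj.homEquiv₁ (ψ ≫ mate s t u f adj φ) ≫ (ρ_ s).inv := by
  have h := homEquiv₁_eq_homEquiv₂_symm_mateEquiv adj adj (mate s t u f adj φ)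
  rw [mateEquiv_mate] at h
  calc _ = (α_ u f s).hom ≫ u ◁ ψ ≫ adj.homEquiv₁ (mate s t u f adj φ) ≫ (ρ_ s).inv := by
        rw [h]
        simp [compCell', Adjunction.homEquiv₂_symm_apply]
    _ = _ := by
        simp [Adjunction.homEquiv₁_apply]

theorem unit_isMndTwoCell_iff :
    adj.unit ▷ t ≫ compCell s t u φ f ψ = ((λ_ t).hom ≫ (ρ_ t).inv) ≫ t ◁ adj.unit ↔
      mate s t u f adj φ ≫ ψ = 𝟙 (t ≫ f) := by
  have hid : ((λ_ t).hom ≫ (ρ_ t).inv) ≫ t ◁ adj.unit =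
      (λ_ t).hom ≫ adj.homEquiv₂ (𝟙 (t ≫ f)) ≫ (α_ t f u).hom := by
    simp [Adjunction.homEquiv₂_apply]
  rw [whiskerRight_unit_comp_compCell, hid, cancel_epi, cancel_mono,
    adj.homEquiv₂.injective.eq_iff]

theorem counit_isMndTwoCell_iff :
    adj.counit ▷ s ≫ ((λ_ s).hom ≫ (ρ_ s).inv) = compCell' s t u φ f ψ ≫ s ◁ adj.counit ↔
      ψ ≫ mate s t u f adj φ = 𝟙 (f ≫ s) := by
  have hid : adj.counit ▷ s ≫ ((λ_ s).hom ≫ (ρ_ s).inv) =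
      (α_ u f s).hom ≫ adj.homEquiv₁ (𝟙 (f ≫ s)) ≫ (ρ_ s).inv := by
    simp [Adjunction.homEquiv₁_apply]
  rw [compCell'_comp_whiskerLeft_counit, hid, cancel_epi, cancel_mono,
    adj.homEquiv₁.injective.eq_iff, eq_comm]

theorem isMndLeftAdjoint_iff {ηs : 𝟙 a ⟶ s} {μs : s ≫ s ⟶ s} {ηt : 𝟙 b ⟶ t}
    {μt : t ≫ t ⟶ t} (hφ : IsMndMor s ηs μs t ηt μt u φ) :
    IsMndLeftAdjoint s ηs μs t ηt μt u φ f ψ adj ↔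
      mate s t u f adj φ ≫ ψ = 𝟙 (t ≫ f) ∧ ψ ≫ mate s t u f adj φ = 𝟙 (f ≫ s) := by
  rw [IsMndLeftAdjoint, unit_isMndTwoCell_iff, counit_isMndTwoCell_iff]
  refine ⟨fun h ↦ h.2, fun ⟨hinv, hinv'⟩ ↦ ⟨?_, hinv, hinv'⟩⟩
  exact isMndMor_inv_of_hom ⟨mate s t u f adj φ, ψ, hinv, hinv'⟩
    (whiskerRight_unit_comp_mate adj φ hφ.1) (whiskerRight_mul_comp_mate adj φ hφ.2)

end MateOfMonadMorphism

theorem doctrinal_adjunction_part2_general {a b : B}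
    (s : a ⟶ a) (ηs : 𝟙 a ⟶ s) (μs : s ≫ s ⟶ s)
    (t : b ⟶ b) (ηt : 𝟙 b ⟶ t) (μt : t ≫ t ⟶ t)
    (u : a ⟶ b) (φ : u ≫ t ⟶ s ≫ u)
    (hφ : IsMndMor s ηs μs t ηt μt u φ) :
    ((∃ (f : b ⟶ a) (ψ : f ≫ s ⟶ t ≫ f) (adj : Bicategory.Adjunction f u),
        IsMndLeftAdjoint s ηs μs t ηt μt u φ f ψ adj) ↔
      (∃ (f : b ⟶ a) (adj : Bicategory.Adjunction f u) (ψ : f ≫ s ⟶ t ≫ f),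
        mate s t u f adj φ ≫ ψ = 𝟙 (t ≫ f) ∧ ψ ≫ mate s t u f adj φ = 𝟙 (f ≫ s))) ∧
    (∀ (f : b ⟶ a) (adj : Bicategory.Adjunction f u) (ψ : f ≫ s ⟶ t ≫ f),
      mate s t u f adj φ ≫ ψ = 𝟙 (t ≫ f) → ψ ≫ mate s t u f adj φ = 𝟙 (f ≫ s) →
      IsMndLeftAdjoint s ηs μs t ηt μt u φ f ψ adj) := by
  simp only [isMndLeftAdjoint_iff _ _ _ hφ]
  exact ⟨⟨fun ⟨f, ψ, adj, h⟩ ↦ ⟨f, adj, ψ, h⟩, fun ⟨f, adj, ψ, h⟩ ↦ ⟨f, ψ, adj, h⟩⟩,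
    fun _ _ _ h h' ↦ ⟨h, h'⟩⟩

/-- (Doctrinal adjunction, part 2.) A monad morphism
`(u, φ) : (a, s) → (b, t)` has a left adjoint in `Mnd(𝒞)` if and only if `u` has a left
adjoint `f` in `𝒞` and the mate `φ̂ : f t ⟹ s f` of `φ` is invertible; in that case the
left adjoint is `(f, φ̂⁻¹)`, whose structure 2-cell is a monad-morphism structure, and the
unit and counit of `f ⊣ u` are 2-cells of `Mnd(𝒞)`. -/
theorem doctrinal_adjunction_part2 {a b : B}
    (s : a ⟶ a) (ηs : 𝟙 a ⟶ s) (μs : s ≫ s ⟶ s)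
    (t : b ⟶ b) (ηt : 𝟙 b ⟶ t) (μt : t ≫ t ⟶ t)
    (u : a ⟶ b) (φ : u ≫ t ⟶ s ≫ u)
    (hs : IsMonad s ηs μs) (ht : IsMonad t ηt μt)
    (hφ : IsMndMor s ηs μs t ηt μt u φ) :
    ((∃ (f : b ⟶ a) (ψ : f ≫ s ⟶ t ≫ f) (adj : Bicategory.Adjunction f u),
        IsMndLeftAdjoint s ηs μs t ηt μt u φ f ψ adj) ↔
      (∃ (f : b ⟶ a) (adj : Bicategory.Adjunction f u) (ψ : f ≫ s ⟶ t ≫ f),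
        mate s t u f adj φ ≫ ψ = 𝟙 (t ≫ f) ∧ ψ ≫ mate s t u f adj φ = 𝟙 (f ≫ s))) ∧
    (∀ (f : b ⟶ a) (adj : Bicategory.Adjunction f u) (ψ : f ≫ s ⟶ t ≫ f),
      mate s t u f adj φ ≫ ψ = 𝟙 (t ≫ f) → ψ ≫ mate s t u f adj φ = 𝟙 (f ≫ s) →
      IsMndLeftAdjoint s ηs μs t ηt μt u φ f ψ adj) :=
  doctrinal_adjunction_part2_general s ηs μs t ηt μt u φ hφ

end WoodStmt14
end

section
/- Split equalizers from pointed endofunctors: let M : B → B be an endofunctor of a category B and η : 1_B ⟹ M a natural transformation such that η_B is a regular monomorphism and η_C is a monomorphism for every object C. Then for every object B, the fork B --η_B--> M B with parallel pair η_{MB}, M η_B : M B → M² B is an equalizer. -/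
open CategoryTheory CategoryTheory.Limits

namespace CategoryTheory.NatTrans

variable {C : Type*} [Category C] {M : C ⥤ C} (η : 𝟭 C ⟶ M)

/-- After cancelling `η.app Z`, naturality moves `l` and `r` under `M`, where they are
precomposed with `η.app X`. -/
theorem comp_eq_comp_of_fork_condition {X Z W : C} [Mono (η.app Z)] {l r : M.obj X ⟶ Z}
    (hlr : η.app X ≫ l = η.app X ≫ r) {k : W ⟶ M.obj X}
    (hk : k ≫ η.app (M.obj X) = k ≫ M.map (η.app X)) : k ≫ l = k ≫ r := by
  rw [← cancel_mono (η.app Z)]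
  calc (k ≫ l) ≫ η.app Z = k ≫ η.app (M.obj X) ≫ M.map l := by
        rw [Category.assoc, ← η.naturality l]; rfl
    _ = k ≫ M.map (η.app X ≫ l) := by rw [reassoc_of% hk, M.map_comp]
    _ = k ≫ M.map (η.app X ≫ r) := by rw [hlr]
    _ = (k ≫ r) ≫ η.app Z := by
        rw [M.map_comp, ← reassoc_of% hk, ← η.naturality r, Category.assoc]; rfl

def isLimitForkOfRegularMono {X : C} (hX : RegularMono (η.app X)) [Mono (η.app hX.Z)] :
    IsLimit (Fork.ofι (η.app X) (η.naturality (η.app X))) :=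
  have := hX.mono
  Fork.IsLimit.mk' _ fun s =>
    let l := hX.lift' s.ι (comp_eq_comp_of_fork_condition η hX.w s.condition)
    ⟨l.1, l.2, fun hm => by rw [← cancel_mono (η.app X)]; exact hm.trans l.2.symm⟩

end CategoryTheory.NatTrans

/-- Let `M : B ⥤ B` be an endofunctor and `η : 𝟭 B ⟶ M` a natural
transformation whose components are regular monomorphisms (in particular monomorphisms).
Then for every object `B`, the fork `B --η_B--> M B` over the parallel pair
`η_{M B}, M η_B : M B ⟶ M² B` is an equalizer. -/
theorem pointed_endofunctor_equalizer {B : Type*} [Category B]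
    (M : B ⥤ B) (η : 𝟭 B ⟶ M)
    (hreg : ∀ X : B, RegularMono (η.app X)) :
    ∀ X : B, Nonempty (IsLimit (Fork.ofι (η.app X)
      (by simpa using η.naturality (η.app X) :
        η.app X ≫ η.app (M.obj X) = η.app X ≫ M.map (η.app X)))) := by
  intro X
  have := (hreg (hreg X).Z).mono
  exact ⟨NatTrans.isLimitForkOfRegularMono η (hreg X)⟩
end

section
/- Let G be a magmal comonad on a magmal category C, and let (Y,υ) be a G-coalgebra such that the left cloaks [Y,Z] and [GY,GZ] exist for all Z ∈ C, all cloaks [Y,GZ] exist, and all Wood fusion morphisms w_{υ,Z} = [υ,1] ∘ G₂ˡ : G[Y,Z] → [Y,GZ] are invertible. Then for every G-coalgebra (Z,ζ) the cloak [(Y,υ),(Z,ζ)] exists in C^G, its underlying object is [Y,Z], its coaction is w_{υ,Z}^{-1} ∘ [1,ζ] : [Y,Z] → G[Y,Z], and the forgetful functor C^G → C sends it to the cloak [Y,Z] in C (i.e., und creates cloaks by (Y,υ)). -/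
open CategoryTheory

namespace WoodStmt19

variable {C : Type*} [Category C]

/-- A magmal comonad: a comonad `G` on a magmal category `(C, T)` together with a natural
family `G₂ : G X ⊗ G Y ⟶ G (X ⊗ Y)` for which `ε` and `δ` are magmal. -/
structure MagmalComonad (T : C ⥤ C ⥤ C) (G : Comonad C) where
  g2 : ∀ X Y : C, (T.obj (G.obj X)).obj (G.obj Y) ⟶ G.obj ((T.obj X).obj Y)
  natl : ∀ {X X' : C} (Y : C) (f : X ⟶ X'),
    (T.map (G.map f)).app (G.obj Y) ≫ g2 X' Y = g2 X Y ≫ G.map ((T.map f).app Y)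
  natr : ∀ (X : C) {Y Y' : C} (g : Y ⟶ Y'),
    (T.obj (G.obj X)).map (G.map g) ≫ g2 X Y' = g2 X Y ≫ G.map ((T.obj X).map g)
  counit_comp : ∀ X Y : C, g2 X Y ≫ G.ε.app ((T.obj X).obj Y) =
    (T.map (G.ε.app X)).app (G.obj Y) ≫ (T.obj X).map (G.ε.app Y)
  delta_comp : ∀ X Y : C, g2 X Y ≫ G.δ.app ((T.obj X).obj Y) =
    (T.map (G.δ.app X)).app (G.obj Y) ≫ (T.obj (G.obj (G.obj X))).map (G.δ.app Y)
      ≫ g2 (G.obj X) (G.obj Y) ≫ G.map (g2 X Y)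

/-- The coaction `G₂ ∘ (ξ ⊗ υ)` on the tensor of the underlying objects. -/
def coact {T : C ⥤ C ⥤ C} {G : Comonad C} (M : MagmalComonad T G)
    (A B : G.Coalgebra) :
    (T.obj A.A).obj B.A ⟶ G.obj ((T.obj A.A).obj B.A) :=
  (T.map A.a).app B.A ≫ (T.obj (G.obj A.A)).map B.a ≫ M.g2 A.A B.A

/-- `(E, ev)` is a left cloak of `Z` by `Y` for a tensor `T` on any category. -/
def IsCloak {D : Type*} [Category D] (T : D ⥤ D ⥤ D) (Y Z E : D)
    (ev : (T.obj E).obj Y ⟶ Z) : Prop :=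
  ∀ (X : D) (f : (T.obj X).obj Y ⟶ Z), ∃! g : X ⟶ E, (T.map g).app Y ≫ ev = f

section Aux

variable (T : C ⥤ C ⥤ C) {G : Comonad C} (M : MagmalComonad T G)
  (A : G.Coalgebra) (E1 : C → C) (ev1 : ∀ Z : C, (T.obj (E1 Z)).obj A.A ⟶ Z)

/-- The test morphism `Φ(x) = G(ev) ∘ G₂ ∘ (x ⊗ υ)` for `x : X ⟶ G [Y,Z]`. -/
def Phi (Z : C) {X : C} (x : X ⟶ G.obj (E1 Z)) : (T.obj X).obj A.A ⟶ G.obj Z :=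
  (T.map x).app A.A ≫ (T.obj (G.obj (E1 Z))).map A.a ≫ M.g2 (E1 Z) A.A ≫ G.map (ev1 Z)

/-- The second-level test morphism for `x : X ⟶ G G [Y,Z]`. -/
def Psi (Z : C) {X : C} (x : X ⟶ G.obj (G.obj (E1 Z))) :
    (T.obj X).obj A.A ⟶ G.obj (G.obj Z) :=
  (T.map x).app A.A ≫ (T.obj (G.obj (G.obj (E1 Z)))).map A.a ≫ M.g2 (G.obj (E1 Z)) A.A ≫
    G.map ((T.obj (G.obj (E1 Z))).map A.a ≫ M.g2 (E1 Z) A.A ≫ G.map (ev1 Z))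

lemma Phi_comp (Z : C) {X X' : C} (u : X ⟶ X') (x : X' ⟶ G.obj (E1 Z)) :
    Phi T M A E1 ev1 Z (u ≫ x) = (T.map u).app A.A ≫ Phi T M A E1 ev1 Z x := by
  simp [Phi]

lemma Phi_w (EG : C → C) (evG : ∀ Z : C, (T.obj (EG Z)).obj A.A ⟶ G.obj Z)
    (w : ∀ Z : C, G.obj (E1 Z) ⟶ EG Z)
    (hw : ∀ Z : C, (T.map (w Z)).app A.A ≫ evG Z =
      (T.obj (G.obj (E1 Z))).map A.a ≫ M.g2 (E1 Z) A.A ≫ G.map (ev1 Z))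
    (Z : C) {X : C} (x : X ⟶ G.obj (E1 Z)) :
    Phi T M A E1 ev1 Z x = (T.map (x ≫ w Z)).app A.A ≫ evG Z := by
  simp only [Phi, Functor.map_comp, NatTrans.comp_app, Category.assoc, hw]

lemma Phi_inj (EG : C → C) (evG : ∀ Z : C, (T.obj (EG Z)).obj A.A ⟶ G.obj Z)
    (hG : ∀ Z : C, IsCloak T A.A (G.obj Z) (EG Z) (evG Z))
    (w : ∀ Z : C, G.obj (E1 Z) ⟶ EG Z)
    (hw : ∀ Z : C, (T.map (w Z)).app A.A ≫ evG Z =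
      (T.obj (G.obj (E1 Z))).map A.a ≫ M.g2 (E1 Z) A.A ≫ G.map (ev1 Z))
    (winv : ∀ Z : C, EG Z ⟶ G.obj (E1 Z))
    (hwinv : ∀ Z : C, w Z ≫ winv Z = 𝟙 _ ∧ winv Z ≫ w Z = 𝟙 _)
    (Z : C) {X : C} (x x' : X ⟶ G.obj (E1 Z))
    (h : Phi T M A E1 ev1 Z x = Phi T M A E1 ev1 Z x') : x = x' := by
  rw [Phi_w T M A E1 ev1 EG evG w hw, Phi_w T M A E1 ev1 EG evG w hw] at h
  have h2 : x ≫ w Z = x' ≫ w Z :=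
    (hG Z X ((T.map (x' ≫ w Z)).app A.A ≫ evG Z)).unique h rfl
  calc x = (x ≫ w Z) ≫ winv Z := by rw [Category.assoc, (hwinv Z).1, Category.comp_id]
    _ = (x' ≫ w Z) ≫ winv Z := by rw [h2]
    _ = x' := by rw [Category.assoc, (hwinv Z).1, Category.comp_id]

lemma Phi_eps (Z : C) {X : C} (x : X ⟶ G.obj (E1 Z)) :
    (T.map (x ≫ G.ε.app (E1 Z))).app A.A ≫ ev1 Z = Phi T M A E1 ev1 Z x ≫ G.ε.app Z := by
  have cc := reassoc_of% (M.counit_comp (E1 Z) A.A)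
  have int := reassoc_of% ((T.map (G.ε.app (E1 Z))).naturality A.a)
  simp only [Phi, Category.assoc]
  rw [show G.map (ev1 Z) ≫ G.ε.app Z = G.ε.app ((T.obj (E1 Z)).obj A.A) ≫ ev1 Z from by
    simpa using G.ε.naturality (ev1 Z)]
  rw [cc, int, ← Functor.map_comp_assoc, A.counit]
  simp [Functor.map_comp]

lemma Psi_delta (Z : C) {X : C} (x : X ⟶ G.obj (E1 Z)) :
    Psi T M A E1 ev1 Z (x ≫ G.δ.app (E1 Z)) = Phi T M A E1 ev1 Z x ≫ G.δ.app Z := by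
  have dc := reassoc_of% (M.delta_comp (E1 Z) A.A)
  have int := reassoc_of% ((T.map (G.δ.app (E1 Z))).naturality A.a)
  have nr := reassoc_of% (M.natr (G.obj (E1 Z)) A.a)
  simp only [Phi, Psi, Functor.map_comp, NatTrans.comp_app, Category.assoc]
  rw [show G.map (ev1 Z) ≫ G.δ.app Z =
      G.δ.app ((T.obj (E1 Z)).obj A.A) ≫ G.map (G.map (ev1 Z)) from by
    simpa using G.δ.naturality (ev1 Z)]
  have hco : (T.obj (G.obj (G.obj (E1 Z)))).map A.a ≫
      (T.obj (G.obj (G.obj (E1 Z)))).map (G.δ.app A.A) =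
      (T.obj (G.obj (G.obj (E1 Z)))).map A.a ≫
        (T.obj (G.obj (G.obj (E1 Z)))).map (G.map A.a) := by
    rw [← Functor.map_comp, ← Functor.map_comp, A.coassoc]
  have hco' := reassoc_of% hco
  rw [dc, int, hco', nr]

lemma Psi_Gmap (Z : C) {X : C} (x : X ⟶ G.obj (E1 Z)) (y : E1 Z ⟶ G.obj (E1 Z)) :
    Psi T M A E1 ev1 Z (x ≫ G.map y) =
      (T.map x).app A.A ≫ (T.obj (G.obj (E1 Z))).map A.a ≫ M.g2 (E1 Z) A.A ≫
        G.map (Phi T M A E1 ev1 Z y) := by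
  have int := reassoc_of% ((T.map (G.map y)).naturality A.a)
  have nl := reassoc_of% (M.natl A.A y)
  simp only [Phi, Psi, Functor.map_comp, NatTrans.comp_app, Category.assoc]
  rw [← int, nl]

lemma Phi_Gmap (Z : C) {X W : C} (x : X ⟶ G.obj W) (g : W ⟶ E1 Z) :
    Phi T M A E1 ev1 Z (x ≫ G.map g) =
      (T.map x).app A.A ≫ (T.obj (G.obj W)).map A.a ≫ M.g2 W A.A ≫
        G.map ((T.map g).app A.A ≫ ev1 Z) := by
  have int := reassoc_of% ((T.map (G.map g)).naturality A.a)
  have nl := reassoc_of% (M.natl A.A g)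
  simp only [Phi, Functor.map_comp, NatTrans.comp_app, Category.assoc]
  rw [← int, nl]

lemma Psi_phi (Z : C) (u : G.obj (E1 Z) ⟶ E1 (G.obj Z))
    (key : (T.map u).app A.A ≫ ev1 (G.obj Z) =
      (T.obj (G.obj (E1 Z))).map A.a ≫ M.g2 (E1 Z) A.A ≫ G.map (ev1 Z))
    {X : C} (x : X ⟶ G.obj (G.obj (E1 Z))) :
    Psi T M A E1 ev1 Z x = Phi T M A E1 ev1 (G.obj Z) (x ≫ G.map u) := by
  have int := reassoc_of% ((T.map (G.map u)).naturality A.a)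
  have nl := reassoc_of% (M.natl A.A u)
  simp only [Phi, Psi, Functor.map_comp, NatTrans.comp_app, Category.assoc]
  rw [← int, nl]
  rw [show G.map ((T.map u).app A.A) ≫ G.map (ev1 (G.obj Z)) =
      G.map ((T.obj (G.obj (E1 Z))).map A.a) ≫ G.map (M.g2 (E1 Z) A.A) ≫
        G.map (G.map (ev1 Z)) from by
    rw [← Functor.map_comp, key, Functor.map_comp, Functor.map_comp]]

lemma Psi_inj (h1 : ∀ Z : C, IsCloak T A.A Z (E1 Z) (ev1 Z))
    (EG : C → C) (evG : ∀ Z : C, (T.obj (EG Z)).obj A.A ⟶ G.obj Z)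
    (hG : ∀ Z : C, IsCloak T A.A (G.obj Z) (EG Z) (evG Z))
    (w : ∀ Z : C, G.obj (E1 Z) ⟶ EG Z)
    (hw : ∀ Z : C, (T.map (w Z)).app A.A ≫ evG Z =
      (T.obj (G.obj (E1 Z))).map A.a ≫ M.g2 (E1 Z) A.A ≫ G.map (ev1 Z))
    (winv : ∀ Z : C, EG Z ⟶ G.obj (E1 Z))
    (hwinv : ∀ Z : C, w Z ≫ winv Z = 𝟙 _ ∧ winv Z ≫ w Z = 𝟙 _)
    (Z : C) {X : C} (x x' : X ⟶ G.obj (G.obj (E1 Z)))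
    (h : Psi T M A E1 ev1 Z x = Psi T M A E1 ev1 Z x') : x = x' := by
  obtain ⟨j, hj, -⟩ := h1 (G.obj Z) (EG Z) (evG Z)
  obtain ⟨j', hj', -⟩ := hG Z (E1 (G.obj Z)) (ev1 (G.obj Z))
  have hjj' : j ≫ j' = 𝟙 (EG Z) := by
    refine (hG Z (EG Z) (evG Z)).unique ?_ (by simp)
    rw [Functor.map_comp, NatTrans.comp_app, Category.assoc, hj', hj]
  have key : (T.map (w Z ≫ j)).app A.A ≫ ev1 (G.obj Z) =
      (T.obj (G.obj (E1 Z))).map A.a ≫ M.g2 (E1 Z) A.A ≫ G.map (ev1 Z) := by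
    rw [Functor.map_comp, NatTrans.comp_app, Category.assoc, hj, hw]
  rw [Psi_phi T M A E1 ev1 Z (w Z ≫ j) key, Psi_phi T M A E1 ev1 Z (w Z ≫ j) key] at h
  have h2 : x ≫ G.map (w Z ≫ j) = x' ≫ G.map (w Z ≫ j) :=
    Phi_inj T M A E1 ev1 EG evG hG w hw winv hwinv (G.obj Z) _ _ h
  have hcancel : (w Z ≫ j) ≫ (j' ≫ winv Z) = 𝟙 (G.obj (E1 Z)) := by
    rw [Category.assoc, ← Category.assoc j j', hjj', Category.id_comp, (hwinv Z).1]
  calc x = (x ≫ G.map (w Z ≫ j)) ≫ G.map (j' ≫ winv Z) := by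
        rw [Category.assoc, ← Functor.map_comp, hcancel]; simp
    _ = (x' ≫ G.map (w Z ≫ j)) ≫ G.map (j' ≫ winv Z) := by rw [h2]
    _ = x' := by rw [Category.assoc, ← Functor.map_comp, hcancel]; simp

end Aux

/-- Let `G` be a magmal comonad on a magmal category `(C, T)`, and let
`(Y, υ)` be a `G`-coalgebra such that the cloaks `[Y,Z]`, `[GY,GZ]` and `[Y,GZ]` exist
for all `Z` and all Wood fusion morphisms `w_{υ,Z} : G[Y,Z] ⟶ [Y,GZ]` are invertible
(with inverses `winv Z`).  Then for every `G`-coalgebra `(Z, ζ)`, the object `[Y,Z]` with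
coaction `w_{υ,Z}⁻¹ ∘ [1,ζ]` is a `G`-coalgebra which, together with an evaluation lying
over `ev : [Y,Z] ⊗ Y ⟶ Z`, is the cloak `[(Y,υ),(Z,ζ)]` in `C^G`; in particular the
forgetful functor creates cloaks by `(Y,υ)`. -/
theorem hopf_wood_creates_cloaks (T : C ⥤ C ⥤ C) (G : Comonad C) (M : MagmalComonad T G)
    (Tbar : G.Coalgebra ⥤ G.Coalgebra ⥤ G.Coalgebra)
    (hobj : ∀ A B : G.Coalgebra, ((Tbar.obj A).obj B).A = (T.obj A.A).obj B.A)
    (hcoact : ∀ A B : G.Coalgebra, ((Tbar.obj A).obj B).a =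
      eqToHom (hobj A B) ≫ coact M A B ≫ G.map (eqToHom (hobj A B).symm))
    (hmap : ∀ {A A' B B' : G.Coalgebra} (f : A ⟶ A') (g : B ⟶ B'),
      ((Tbar.map f).app B ≫ (Tbar.obj A').map g).f =
        eqToHom (hobj A B) ≫ (T.map f.f).app B.A ≫ (T.obj A'.A).map g.f ≫
          eqToHom (hobj A' B').symm)
    (A : G.Coalgebra)
    -- the cloaks `[Y,Z]` in `C`
    (E1 : C → C) (ev1 : ∀ Z : C, (T.obj (E1 Z)).obj A.A ⟶ Z)
    (h1 : ∀ Z : C, IsCloak T A.A Z (E1 Z) (ev1 Z))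
    -- the cloaks `[GY,GZ]` in `C`
    (E2G : C → C) (ev2G : ∀ Z : C, (T.obj (E2G Z)).obj (G.obj A.A) ⟶ G.obj Z)
    (h2G : ∀ Z : C, IsCloak T (G.obj A.A) (G.obj Z) (E2G Z) (ev2G Z))
    -- the cloaks `[Y,GZ]` in `C`
    (EG : C → C) (evG : ∀ Z : C, (T.obj (EG Z)).obj A.A ⟶ G.obj Z)
    (hG : ∀ Z : C, IsCloak T A.A (G.obj Z) (EG Z) (evG Z))
    -- the Wood fusion morphisms `w_{υ,Z} = [υ,1] ∘ G₂ˡ`, and their invertibility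
    (w : ∀ Z : C, G.obj (E1 Z) ⟶ EG Z)
    (hw : ∀ Z : C, (T.map (w Z)).app A.A ≫ evG Z =
      (T.obj (G.obj (E1 Z))).map A.a ≫ M.g2 (E1 Z) A.A ≫ G.map (ev1 Z))
    (winv : ∀ Z : C, EG Z ⟶ G.obj (E1 Z))
    (hwinv : ∀ Z : C, w Z ≫ winv Z = 𝟙 _ ∧ winv Z ≫ w Z = 𝟙 _)
    -- the maps `[1,ζ] : [Y,Z] ⟶ [Y,GZ]`
    (l : ∀ B : G.Coalgebra, E1 B.A ⟶ EG B.A)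
    (hl : ∀ B : G.Coalgebra, (T.map (l B)).app A.A ≫ evG B.A = ev1 B.A ≫ B.a) :
    ∀ B : G.Coalgebra,
      ∃ (hcounit : (l B ≫ winv B.A) ≫ G.ε.app (E1 B.A) = 𝟙 (E1 B.A))
        (hcoassoc : (l B ≫ winv B.A) ≫ G.δ.app (E1 B.A) =
          (l B ≫ winv B.A) ≫ G.map (l B ≫ winv B.A))
        (ev : (Tbar.obj ⟨E1 B.A, l B ≫ winv B.A, hcounit, hcoassoc⟩).obj A ⟶ B),
        ev.f = eqToHom (hobj ⟨E1 B.A, l B ≫ winv B.A, hcounit, hcoassoc⟩ A) ≫ ev1 B.A ∧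
        IsCloak Tbar A B ⟨E1 B.A, l B ≫ winv B.A, hcounit, hcoassoc⟩ ev := by
  intro B
  have PhiInj := Phi_inj T M A E1 ev1 EG evG hG w hw winv hwinv
  have PsiInj := Psi_inj T M A E1 ev1 h1 EG evG hG w hw winv hwinv
  have hPhiXi : Phi T M A E1 ev1 B.A (l B ≫ winv B.A) = ev1 B.A ≫ B.a := by
    rw [Phi_w T M A E1 ev1 EG evG w hw, Category.assoc, (hwinv B.A).2, Category.comp_id, hl]
  have hcounit : (l B ≫ winv B.A) ≫ G.ε.app (E1 B.A) = 𝟙 (E1 B.A) := by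
    refine (h1 B.A (E1 B.A) (ev1 B.A)).unique ?_ (by simp)
    rw [Phi_eps T M A E1 ev1 B.A, hPhiXi, Category.assoc, B.counit, Category.comp_id]
  have hcoassoc : (l B ≫ winv B.A) ≫ G.δ.app (E1 B.A) =
      (l B ≫ winv B.A) ≫ G.map (l B ≫ winv B.A) := by
    refine PsiInj B.A _ _ ?_
    rw [Psi_delta T M A E1 ev1 B.A, hPhiXi, Category.assoc, B.coassoc]
    rw [Psi_Gmap T M A E1 ev1 B.A, hPhiXi]
    have h2 := reassoc_of% hPhiXi
    simp only [Phi, Functor.map_comp, NatTrans.comp_app, Category.assoc] at h2 ⊢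
    rw [h2]
  have hkey : coact M ⟨E1 B.A, l B ≫ winv B.A, hcounit, hcoassoc⟩ A ≫ G.map (ev1 B.A) =
      ev1 B.A ≫ B.a := by
    have : coact M ⟨E1 B.A, l B ≫ winv B.A, hcounit, hcoassoc⟩ A ≫ G.map (ev1 B.A) =
        Phi T M A E1 ev1 B.A (l B ≫ winv B.A) := by
      simp [coact, Phi]
    rw [this, hPhiXi]
  refine ⟨hcounit, hcoassoc,
    ⟨eqToHom (hobj ⟨E1 B.A, l B ≫ winv B.A, hcounit, hcoassoc⟩ A) ≫ ev1 B.A, ?_⟩, rfl, ?_⟩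
  · rw [hcoact]
    simp only [Functor.map_comp, eqToHom_map, Category.assoc, eqToHom_trans_assoc,
      eqToHom_refl, Category.id_comp]
    rw [hkey]
  · intro X fb
    obtain ⟨g, hg, hgu⟩ := h1 B.A X.A (eqToHom (hobj X A).symm ≫ fb.f)
    have hghom : X.a ≫ G.map g = g ≫ (l B ≫ winv B.A) := by
      apply PhiInj B.A
      have e1 : Phi T M A E1 ev1 B.A (g ≫ (l B ≫ winv B.A)) =
          (eqToHom (hobj X A).symm ≫ fb.f) ≫ B.a := by
        rw [Phi_comp T M A E1 ev1 B.A g _, hPhiXi, ← Category.assoc, hg]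
      have e2 : Phi T M A E1 ev1 B.A (X.a ≫ G.map g) =
          coact M X A ≫ G.map (eqToHom (hobj X A).symm ≫ fb.f) := by
        rw [Phi_Gmap T M A E1 ev1 B.A X.a g, hg]
        simp [coact]
      have hh := fb.h
      rw [hcoact X A] at hh
      simp only [Category.assoc] at hh
      have e3 : coact M X A ≫ G.map (eqToHom (hobj X A).symm ≫ fb.f) =
          (eqToHom (hobj X A).symm ≫ fb.f) ≫ B.a := by
        calc coact M X A ≫ G.map (eqToHom (hobj X A).symm ≫ fb.f)
            = eqToHom (hobj X A).symm ≫ eqToHom (hobj X A) ≫ coact M X A ≫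
              G.map (eqToHom (hobj X A).symm) ≫ G.map fb.f := by
                simp [Functor.map_comp]
          _ = eqToHom (hobj X A).symm ≫ fb.f ≫ B.a := by rw [hh]
          _ = (eqToHom (hobj X A).symm ≫ fb.f) ≫ B.a := by rw [Category.assoc]
      rw [e2, e3, e1]
    refine ⟨⟨g, hghom⟩, ?_, ?_⟩
    · have hm := hmap (A := X) (⟨g, hghom⟩ :
        X ⟶ (⟨E1 B.A, l B ≫ winv B.A, hcounit, hcoassoc⟩ : G.Coalgebra)) (𝟙 A)
      simp only [CategoryTheory.Functor.map_id, Category.comp_id, Comonad.Coalgebra.id_f,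
        Comonad.Coalgebra.comp_f] at hm
      refine Comonad.Coalgebra.Hom.ext' _ _ _ _ ?_
      simp only [Comonad.Coalgebra.comp_f]
      rw [hm]
      simp only [Category.assoc, eqToHom_trans_assoc, eqToHom_refl, Category.id_comp]
      rw [hg]
      simp
    · intro y hy
      have hm := hmap (A := X) y (𝟙 A)
      simp only [CategoryTheory.Functor.map_id, Category.comp_id, Comonad.Coalgebra.id_f,
        Comonad.Coalgebra.comp_f] at hm
      have hyf := congrArg Comonad.Coalgebra.Hom.f hy
      simp only [Comonad.Coalgebra.comp_f] at hyf
      rw [hm] at hyf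
      simp only [Category.assoc, eqToHom_trans_assoc, eqToHom_refl, Category.id_comp] at hyf
      refine Comonad.Coalgebra.Hom.ext' _ _ _ _ (hgu y.f ?_)
      rw [← hyf]
      simp


end WoodStmt19
end
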